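/- arXiv:2206.07135 — 8 statements merged into one kernel-verified Lean document; each statement's English description precedes it below -/
import Mathlib

section
/- Let C be a multicomplex over a commutative ring k with differentials d_0, d_1, …, d_s. Let r ≥ 1, p ∈ ℤ, and suppose x ∈ C(p,b) and c_{p−k} ∈ C(p−k, b+k−1) for 0 ≤ k ≤ r−1 satisfy x = ∑_{k=0}^{r−1} d_k c_{p−k} and ∑_{k=l}^{r−1} d_{k−l} c_{p−k} = 0 for all 1 ≤ l ≤ r−1. Define z_{p+j} := −∑_{i=0}^{r−1} d_{j+i} c_{p−i} ∈ C(p+j, b−j) for 1 ≤ j ≤ r−1. Then d_0 x = 0 and, for every 1 ≤ n ≤ r−1, d_n x = ∑_{i=0}^{n−1} d_i z_{p+n−i}. -/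
/-!
Multicomplex setup.

A multicomplex (with differentials vanishing above order `s`) over a commutative ring `k`
is modelled inside one ambient `k`-module `M`: the bigraded pieces `C (a, b)` are given by
a family of submodules `𝒞 a b : Submodule k M`, and the structure maps are `k`-linear maps
`D i : M →ₗ[k] M` (for `i : ℕ`) satisfying
* `D i (𝒞 a b) ⊆ 𝒞 (a + i) (b + 1 - i)` (bidegree `(i, 1 - i)`),
* `D i = 0` for `i > s`,
* `∑_{i + j = n} D i ∘ D j = 0` for all `n`.

An element of the total complex `Tot C` in total degree `h` is a function `x : ℤ → M`
(its value at `a` being the column-`a` component) with `x a ∈ 𝒞 a (h - a)` for all `a`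
and finite support; the differential acts componentwise by
`(d x) a = ∑_{i = 0}^{s} D i (x (a - i))`.
-/

variable {k M : Type*} [CommRing k] [AddCommGroup M] [Module k M]

/-- The differential of the total complex, acting componentwise:
`(d x) a = ∑_{i=0}^{s} d_i (x (a - i))`. -/
def dTot (D : ℕ → M →ₗ[k] M) (s : ℕ) (x : ℤ → M) : ℤ → M :=
  fun a => ∑ i ∈ Finset.range (s + 1), D i (x (a - (i : ℤ)))

/-- `x : ℤ → M` is an element of the total complex in total degree `h`:
its column-`a` component lies in `C (a, h - a)` for every `a`, and it has finite support. -/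
def IsTotalElem (𝒞 : ℤ → ℤ → Submodule k M) (h : ℤ) (x : ℤ → M) : Prop :=
  (∀ a : ℤ, x a ∈ 𝒞 a (h - a)) ∧ {a : ℤ | x a ≠ 0}.Finite

/-- `x ∈ Z_r^p(D) = F_p ∩ d⁻¹(F_{p+r})`: `x` is an element of the total complex (total
degree `h`) all of whose nonzero components lie in columns `≥ p`, and all components of
`d x` in columns `< p + r` vanish. -/
def MemZD (𝒞 : ℤ → ℤ → Submodule k M) (D : ℕ → M →ₗ[k] M) (s : ℕ)
    (h : ℤ) (r : ℕ) (p : ℤ) (x : ℤ → M) : Prop :=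
  IsTotalElem 𝒞 h x ∧ (∀ a : ℤ, a < p → x a = 0) ∧
    ∀ a : ℤ, a < p + r → dTot D s x a = 0

/-- `x ∈ B_r^p(D) = Z_{r-1}^{p+1}(D) + d (Z_{r-1}^{p-r+1}(D))`. -/
def MemBD (𝒞 : ℤ → ℤ → Submodule k M) (D : ℕ → M →ₗ[k] M) (s : ℕ)
    (h : ℤ) (r : ℕ) (p : ℤ) (x : ℤ → M) : Prop :=
  ∃ ρ c : ℤ → M, MemZD 𝒞 D s h (r - 1) (p + 1) ρ ∧
    MemZD 𝒞 D s (h - 1) (r - 1) (p - (r : ℤ) + 1) c ∧ x = ρ + dTot D s c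

/-- `x ∈ Z_r^p`: `x ∈ C (p, b)`, `d_0 x = 0`, and there exist witnesses
`z j ∈ C (p + j, b - j)` for `1 ≤ j ≤ r - 1` with
`d_n x = ∑_{i=0}^{n-1} d_i (z (n - i))` for all `1 ≤ n ≤ r - 1`. -/
def MemZ (𝒞 : ℤ → ℤ → Submodule k M) (D : ℕ → M →ₗ[k] M)
    (r : ℕ) (p b : ℤ) (x : M) : Prop :=
  x ∈ 𝒞 p b ∧ D 0 x = 0 ∧ ∃ z : ℕ → M,
    (∀ j : ℕ, 1 ≤ j → j ≤ r - 1 → z j ∈ 𝒞 (p + (j : ℤ)) (b - (j : ℤ))) ∧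
    ∀ n : ℕ, 1 ≤ n → n ≤ r - 1 →
      D n x = ∑ i ∈ Finset.range n, D i (z (n - i))

/-- `x ∈ B_r^p`: there exist `c kk ∈ C (p - kk, b + kk - 1)` for `0 ≤ kk ≤ r - 1` with
`x = ∑_{kk=0}^{r-1} d_kk (c kk)` and `∑_{kk=l}^{r-1} d_{kk-l} (c kk) = 0` for
all `1 ≤ l ≤ r - 1`. -/
def MemB (𝒞 : ℤ → ℤ → Submodule k M) (D : ℕ → M →ₗ[k] M)
    (r : ℕ) (p b : ℤ) (x : M) : Prop :=
  ∃ c : ℕ → M, (∀ kk : ℕ, kk ≤ r - 1 → c kk ∈ 𝒞 (p - (kk : ℤ)) (b + (kk : ℤ) - 1)) ∧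
    x = ∑ kk ∈ Finset.range r, D kk (c kk) ∧
    ∀ l : ℕ, 1 ≤ l → l ≤ r - 1 →
      ∑ kk ∈ Finset.Icc l (r - 1), D (kk - l) (c kk) = 0

/-- If `x = ∑_{k=0}^{r-1} d_k c_{p-k}` with
`∑_{k=l}^{r-1} d_{k-l} c_{p-k} = 0` for `1 ≤ l ≤ r-1`, then setting
`z_{p+j} := -∑_{i=0}^{r-1} d_{j+i} c_{p-i} ∈ C (p+j, b-j)` one has `d_0 x = 0` and
`d_n x = ∑_{i=0}^{n-1} d_i z_{p+n-i}` for every `1 ≤ n ≤ r-1`. -/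
theorem multicomplex_explicit_cycle_witnesses
    {k M : Type*} [CommRing k] [AddCommGroup M] [Module k M]
    (𝒞 : ℤ → ℤ → Submodule k M) (D : ℕ → M →ₗ[k] M) (s : ℕ)
    (hmap : ∀ (i : ℕ) (a b : ℤ), ∀ x ∈ 𝒞 a b, D i x ∈ 𝒞 (a + (i : ℤ)) (b + 1 - (i : ℤ)))
    (hvan : ∀ i : ℕ, s < i → D i = 0)
    (hrel : ∀ (n : ℕ) (x : M), ∑ i ∈ Finset.range (n + 1), D i (D (n - i) x) = 0)
    (r : ℕ) (hr : 1 ≤ r) (p b : ℤ) (x : M) (hx : x ∈ 𝒞 p b)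
    (c : ℕ → M)
    (hcmem : ∀ kk : ℕ, kk ≤ r - 1 → c kk ∈ 𝒞 (p - (kk : ℤ)) (b + (kk : ℤ) - 1))
    (hxc : x = ∑ kk ∈ Finset.range r, D kk (c kk))
    (hcrel : ∀ l : ℕ, 1 ≤ l → l ≤ r - 1 →
      ∑ kk ∈ Finset.Icc l (r - 1), D (kk - l) (c kk) = 0) :
    D 0 x = 0 ∧
    (∀ j : ℕ, 1 ≤ j → j ≤ r - 1 →
      (-(∑ i ∈ Finset.range r, D (j + i) (c i))) ∈ 𝒞 (p + (j : ℤ)) (b - (j : ℤ))) ∧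
    ∀ n : ℕ, 1 ≤ n → n ≤ r - 1 →
      D n x = ∑ i ∈ Finset.range n,
        D i (-(∑ jj ∈ Finset.range r, D ((n - i) + jj) (c jj))) := by
  have key : ∀ n : ℕ, ∑ jj ∈ Finset.range r,
      ∑ i ∈ Finset.range (n + 1), D i (D (n + jj - i) (c jj)) = 0 := by
    intro n
    have h1 : ∀ jj ∈ Finset.range r,
        ∑ i ∈ Finset.range (n + 1), D i (D (n + jj - i) (c jj))
          = -∑ l ∈ Finset.Icc 1 jj, D (n + l) (D (jj - l) (c jj)) := by
      intro jj _
      have h0 := hrel (n + jj) (c jj)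
      rw [show n + jj + 1 = (n + 1) + jj by omega, Finset.sum_range_add] at h0
      have h2 : ∑ i ∈ Finset.range jj, D (n + 1 + i) (D (n + jj - (n + 1 + i)) (c jj))
          = ∑ l ∈ Finset.Icc 1 jj, D (n + l) (D (jj - l) (c jj)) := by
        rw [show Finset.Icc 1 jj = Finset.Ico 1 (jj + 1) by rfl, Finset.sum_Ico_eq_sum_range]
        apply Finset.sum_congr (by congr 1)
        intro i hi
        simp only [Finset.mem_range] at hi
        have e1 : n + 1 + i = n + (1 + i) := by omega
        have e2 : n + jj - (n + (1 + i)) = jj - (1 + i) := by omega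
        rw [e1, e2]
      rw [h2] at h0
      exact eq_neg_of_add_eq_zero_left h0
    rw [Finset.sum_congr rfl h1, Finset.sum_neg_distrib, neg_eq_zero]
    rw [Finset.sum_comm' (t' := Finset.Icc 1 (r - 1)) (s' := fun l => Finset.Icc l (r - 1))
      (by intro jj l; simp only [Finset.mem_range, Finset.mem_Icc]; omega)]
    apply Finset.sum_eq_zero
    intro l hl
    simp only [Finset.mem_Icc] at hl
    rw [← map_sum, hcrel l hl.1 hl.2, map_zero]
  refine ⟨?_, ?_, ?_⟩
  · have h := key 0
    simpa [hxc, map_sum] using h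
  · intro j _ hj
    apply neg_mem
    apply Submodule.sum_mem
    intro i hi
    simp only [Finset.mem_range] at hi
    have := hmap (j + i) _ _ (c i) (hcmem i (by omega))
    convert this using 2 <;> push_cast <;> ring
  · intro n hn hnr
    have h := key n
    rw [Finset.sum_comm] at h
    rw [show n + 1 = n + 1 by rfl, Finset.sum_range_succ] at h
    have h3 : ∑ jj ∈ Finset.range r, D n (D (n + jj - n) (c jj)) = D n x := by
      rw [hxc, map_sum]
      apply Finset.sum_congr rfl
      intro jj _
      rw [show n + jj - n = jj by omega]
    rw [h3] at h
    have h4 : D n x = -∑ i ∈ Finset.range n, ∑ jj ∈ Finset.range r,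
        D i (D (n + jj - i) (c jj)) := eq_neg_of_add_eq_zero_right h
    rw [h4, ← Finset.sum_neg_distrib]
    apply Finset.sum_congr rfl
    intro i hi
    simp only [Finset.mem_range] at hi
    rw [map_neg, map_sum]
    refine congrArg Neg.neg (Finset.sum_congr rfl fun jj _ => ?_)
    rw [show n + jj - i = n - i + jj by omega]
end

section
/- Let C be a multicomplex over a commutative ring k, with total complex Tot C, differential d, and column filtration F_p. For every r ≥ 1 and p ∈ ℤ, if x ∈ Z_r^p(D) = F_p ∩ d^{−1}(F_{p+r}), then its column-p component (x)_p lies in Z_r^p; explicitly, d_0 (x)_p = 0, and the elements z_{p+j} := −(x)_{p+j} for 1 ≤ j ≤ r−1 satisfy d_n (x)_p = ∑_{i=0}^{n−1} d_i z_{p+n−i} for all 1 ≤ n ≤ r−1. -/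
/-!
Multicomplex setup.

A multicomplex (with differentials vanishing above order `s`) over a commutative ring `k`
is modelled inside one ambient `k`-module `M`: the bigraded pieces `C (a, b)` are given by
a family of submodules `𝒞 a b : Submodule k M`, and the structure maps are `k`-linear maps
`D i : M →ₗ[k] M` (for `i : ℕ`) satisfying
* `D i (𝒞 a b) ⊆ 𝒞 (a + i) (b + 1 - i)` (bidegree `(i, 1 - i)`),
* `D i = 0` for `i > s`,
* `∑_{i + j = n} D i ∘ D j = 0` for all `n`.

An element of the total complex `Tot C` in total degree `h` is a function `x : ℤ → M`
(its value at `a` being the column-`a` component) with `x a ∈ 𝒞 a (h - a)` for all `a`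
and finite support; the differential acts componentwise by
`(d x) a = ∑_{i = 0}^{s} D i (x (a - i))`.
-/

variable {k M : Type*} [CommRing k] [AddCommGroup M] [Module k M]

/-- If `x ∈ Z_r^p(D) = F_p ∩ d⁻¹(F_{p+r})`, then its column-`p` component
`(x)_p` lies in `Z_r^p`; explicitly `d_0 (x)_p = 0` and the witnesses
`z_{p+j} := -(x)_{p+j}` satisfy `d_n (x)_p = ∑_{i=0}^{n-1} d_i z_{p+n-i}` for
all `1 ≤ n ≤ r-1`. -/
theorem memZD_component_memZ
    {k M : Type*} [CommRing k] [AddCommGroup M] [Module k M]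
    (𝒞 : ℤ → ℤ → Submodule k M) (D : ℕ → M →ₗ[k] M) (s : ℕ)
    (hmap : ∀ (i : ℕ) (a b : ℤ), ∀ x ∈ 𝒞 a b, D i x ∈ 𝒞 (a + (i : ℤ)) (b + 1 - (i : ℤ)))
    (hvan : ∀ i : ℕ, s < i → D i = 0)
    (hrel : ∀ (n : ℕ) (x : M), ∑ i ∈ Finset.range (n + 1), D i (D (n - i) x) = 0)
    (hdeg : ℤ) (r : ℕ) (hr : 1 ≤ r) (p : ℤ) (x : ℤ → M)
    (hx : MemZD 𝒞 D s hdeg r p x) :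
    MemZ 𝒞 D r p (hdeg - p) (x p) ∧
    D 0 (x p) = 0 ∧
    ∀ n : ℕ, 1 ≤ n → n ≤ r - 1 →
      D n (x p) = ∑ i ∈ Finset.range n, D i (-(x (p + ((n - i : ℕ) : ℤ)))) := by
  obtain ⟨⟨hmem, -⟩, hlow, hd⟩ := hx
  -- key lemma: for n ≤ r - 1, the truncated sum vanishes
  have key : ∀ n : ℕ, n ≤ r - 1 →
      ∑ i ∈ Finset.range (n + 1), D i (x (p + (n : ℤ) - (i : ℤ))) = 0 := by
    intro n hn
    have hlt : p + (n : ℤ) < p + r := by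
      have : (n : ℤ) < r := by exact_mod_cast Nat.lt_of_le_of_lt hn (Nat.sub_lt hr one_pos)
      omega
    have hdt : dTot D s x (p + (n : ℤ)) = 0 := hd _ hlt
    unfold dTot at hdt
    set N := max s n with hN
    have h1 : ∑ i ∈ Finset.range (s + 1), D i (x (p + (n : ℤ) - (i : ℤ)))
        = ∑ i ∈ Finset.range (N + 1), D i (x (p + (n : ℤ) - (i : ℤ))) := by
      refine Finset.sum_subset ?_ ?_
      · exact Finset.range_subset_range.2 (by omega)
      · intro i hi hi'
        have : s < i := by
          simp only [Finset.mem_range] at hi hi'; omega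
        rw [hvan i this]; rfl
    have h2 : ∑ i ∈ Finset.range (n + 1), D i (x (p + (n : ℤ) - (i : ℤ)))
        = ∑ i ∈ Finset.range (N + 1), D i (x (p + (n : ℤ) - (i : ℤ))) := by
      refine Finset.sum_subset ?_ ?_
      · exact Finset.range_subset_range.2 (by omega)
      · intro i hi hi'
        have hni : (n : ℤ) < i := by
          simp only [Finset.mem_range] at hi hi'; exact_mod_cast (by omega : n < i)
        have : x (p + (n : ℤ) - (i : ℤ)) = 0 := hlow _ (by omega)
        rw [this, map_zero]
    rw [h2, ← h1, ← hdt]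
  have hDn : ∀ n : ℕ, 1 ≤ n → n ≤ r - 1 →
      D n (x p) = ∑ i ∈ Finset.range n, D i (-(x (p + ((n - i : ℕ) : ℤ)))) := by
    intro n h1n hn
    have hk := key n hn
    rw [Finset.sum_range_succ] at hk
    have hp : p + (n : ℤ) - (n : ℤ) = p := by ring
    rw [hp] at hk
    have : D n (x p) = -∑ i ∈ Finset.range n, D i (x (p + (n : ℤ) - (i : ℤ))) :=
      eq_neg_of_add_eq_zero_right hk
    rw [this, ← Finset.sum_neg_distrib]
    apply Finset.sum_congr rfl
    intro i hi
    have hi' : i ≤ n := le_of_lt (Finset.mem_range.1 hi)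
    rw [← map_neg]
    congr 2
    push_cast [Nat.cast_sub hi']
    ring
  have hD0 : D 0 (x p) = 0 := by
    have hk := key 0 (by omega)
    simpa using hk
  refine ⟨⟨hmem p, hD0, ⟨fun j => -(x (p + (j : ℤ))), ?_, ?_⟩⟩, hD0, hDn⟩
  · intro j h1j hj
    have := hmem (p + (j : ℤ))
    have heq : hdeg - (p + (j : ℤ)) = hdeg - p - (j : ℤ) := by ring
    rw [heq] at this
    exact neg_mem this
  · intro n h1n hn
    simpa using hDn n h1n hn
end

section
/- Let C be a multicomplex over a commutative ring k, with total complex Tot C, differential d, and column filtration F_p. Let r ≥ 1 and p ∈ ℤ. If x ∈ Z_r^p(D) = F_p ∩ d^{−1}(F_{p+r}) and its column-p component (x)_p belongs to B_r^p, then x ∈ B_r^p(D) = Z_{r−1}^{p+1}(D) + d(Z_{r−1}^{p−r+1}(D)); that is, x can be written as x = ρ + dc with ρ ∈ F_{p+1}, dρ ∈ F_{p+r}, c ∈ F_{p−r+1}, and dc ∈ F_p. -/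
/-!
Multicomplex setup.

A multicomplex (with differentials vanishing above order `s`) over a commutative ring `k`
is modelled inside one ambient `k`-module `M`: the bigraded pieces `C (a, b)` are given by
a family of submodules `𝒞 a b : Submodule k M`, and the structure maps are `k`-linear maps
`D i : M →ₗ[k] M` (for `i : ℕ`) satisfying
* `D i (𝒞 a b) ⊆ 𝒞 (a + i) (b + 1 - i)` (bidegree `(i, 1 - i)`),
* `D i = 0` for `i > s`,
* `∑_{i + j = n} D i ∘ D j = 0` for all `n`.

An element of the total complex `Tot C` in total degree `h` is a function `x : ℤ → M`
(its value at `a` being the column-`a` component) with `x a ∈ 𝒞 a (h - a)` for all `a`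
and finite support; the differential acts componentwise by
`(d x) a = ∑_{i = 0}^{s} D i (x (a - i))`.
-/

variable {k M : Type*} [CommRing k] [AddCommGroup M] [Module k M]

section AuxLemmas

variable {k M : Type*} [CommRing k] [AddCommGroup M] [Module k M]

/-- Two range-sums of the same function agree if the function vanishes beyond both bounds. -/
lemma sum_range_eq_of_vanish {β : Type*} [AddCommMonoid β] {f : ℕ → β} {m n : ℕ}
    (hm : ∀ i, m ≤ i → f i = 0) (hn : ∀ i, n ≤ i → f i = 0) :
    ∑ i ∈ Finset.range m, f i = ∑ i ∈ Finset.range n, f i := by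
  rw [Finset.sum_subset (Finset.range_subset_range.2 (le_max_left m n))
      (fun i _ hi => hm i (by simp [Finset.mem_range] at hi; omega)),
    Finset.sum_subset (Finset.range_subset_range.2 (le_max_right m n))
      (fun i _ hi => hn i (by simp [Finset.mem_range] at hi; omega))]

/-- `d ∘ d = 0` on the total complex, componentwise. -/
lemma dTot_dTot_eq_zero (D : ℕ → M →ₗ[k] M) (s : ℕ)
    (hvan : ∀ i : ℕ, s < i → D i = 0)
    (hrel : ∀ (n : ℕ) (x : M), ∑ i ∈ Finset.range (n + 1), D i (D (n - i) x) = 0)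
    (y : ℤ → M) (a : ℤ) : dTot D s (dTot D s y) a = 0 := by
  classical
  have hD0 : ∀ i : ℕ, s < i → ∀ m : M, D i m = 0 := fun i hi m => by rw [hvan i hi]; rfl
  have step1 : dTot D s (dTot D s y) a
      = ∑ q ∈ (Finset.range (s + 1)) ×ˢ (Finset.range (s + 1)),
          D q.1 (D q.2 (y (a - (q.1 : ℤ) - (q.2 : ℤ)))) := by
    rw [Finset.sum_product]
    simp only [dTot, map_sum]
  have step3 : (0 : M)
      = ∑ q ∈ ((Finset.range (2 * s + 1)).sigma fun n => Finset.range (n + 1)),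
          D q.2 (D (q.1 - q.2) (y (a - (q.1 : ℤ)))) := by
    rw [(Finset.sum_sigma' (Finset.range (2 * s + 1)) (fun n => Finset.range (n + 1))
      (fun n i => D i (D (n - i) (y (a - (n : ℤ)))))).symm.trans
      (Finset.sum_congr rfl (fun n _ => hrel n (y (a - (n : ℤ)))))]
    simp
  have step2 : ∑ q ∈ ((Finset.range (2 * s + 1)).sigma fun n => Finset.range (n + 1)),
          D q.2 (D (q.1 - q.2) (y (a - (q.1 : ℤ))))
      = ∑ q ∈ (((Finset.range (2 * s + 1)).sigma fun n => Finset.range (n + 1)).filter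
          (fun q => q.2 ≤ s ∧ q.1 - q.2 ≤ s)),
          D q.2 (D (q.1 - q.2) (y (a - (q.1 : ℤ)))) := by
    refine (Finset.sum_filter_of_ne ?_).symm
    intro q _ hq
    by_contra hc
    push_neg at hc
    rcases Nat.lt_or_ge s q.2 with h1 | h1
    · exact hq (hD0 q.2 h1 _)
    · exact hq (by rw [hD0 (q.1 - q.2) (hc h1) (y (a - (q.1 : ℤ)))]; simp)
  have step4 : ∑ q ∈ (Finset.range (s + 1)) ×ˢ (Finset.range (s + 1)),
          D q.1 (D q.2 (y (a - (q.1 : ℤ) - (q.2 : ℤ))))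
      = ∑ q ∈ (((Finset.range (2 * s + 1)).sigma fun n => Finset.range (n + 1)).filter
          (fun q => q.2 ≤ s ∧ q.1 - q.2 ≤ s)),
          D q.2 (D (q.1 - q.2) (y (a - (q.1 : ℤ)))) := by
    refine Finset.sum_nbij' (fun q : ℕ × ℕ => (⟨q.1 + q.2, q.1⟩ : Σ _ : ℕ, ℕ))
      (fun q : Σ _ : ℕ, ℕ => ((q.2, q.1 - q.2) : ℕ × ℕ)) ?_ ?_ ?_ ?_ ?_
    · intro q hq
      simp only [Finset.mem_product, Finset.mem_range] at hq
      simp only [Finset.mem_filter, Finset.mem_sigma, Finset.mem_range]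
      omega
    · intro q hq
      simp only [Finset.mem_filter, Finset.mem_sigma, Finset.mem_range] at hq
      simp only [Finset.mem_product, Finset.mem_range]
      omega
    · intro q hq
      simp only [Finset.mem_product, Finset.mem_range] at hq
      simp only [Nat.add_sub_cancel_left]
    · intro q hq
      simp only [Finset.mem_filter, Finset.mem_sigma, Finset.mem_range] at hq
      have : q.2 + (q.1 - q.2) = q.1 := by omega
      simp only [this]
    · intro q hq
      simp only [Finset.mem_product, Finset.mem_range] at hq
      have h1 : q.1 + q.2 - q.1 = q.2 := by omega
      have h2 : (a - ((q.1 + q.2 : ℕ) : ℤ)) = a - (q.1 : ℤ) - (q.2 : ℤ) := by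
        push_cast; ring
      simp only [h1, h2]
  rw [step1, step4, ← step2, ← step3]

end AuxLemmas

/-- If `x ∈ Z_r^p(D)` and its column-`p` component lies in `B_r^p`, then
`x ∈ B_r^p(D) = Z_{r-1}^{p+1}(D) + d (Z_{r-1}^{p-r+1}(D))`, i.e. `x = ρ + d c` with
`ρ ∈ F_{p+1}`, `d ρ ∈ F_{p+r}`, `c ∈ F_{p-r+1}` and `d c ∈ F_p`. -/
theorem memZD_component_memB_implies_memBD
    {k M : Type*} [CommRing k] [AddCommGroup M] [Module k M]
    (𝒞 : ℤ → ℤ → Submodule k M) (D : ℕ → M →ₗ[k] M) (s : ℕ)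
    (hmap : ∀ (i : ℕ) (a b : ℤ), ∀ x ∈ 𝒞 a b, D i x ∈ 𝒞 (a + (i : ℤ)) (b + 1 - (i : ℤ)))
    (hvan : ∀ i : ℕ, s < i → D i = 0)
    (hrel : ∀ (n : ℕ) (x : M), ∑ i ∈ Finset.range (n + 1), D i (D (n - i) x) = 0)
    (hdeg : ℤ) (r : ℕ) (hr : 1 ≤ r) (p : ℤ) (x : ℤ → M)
    (hxZ : MemZD 𝒞 D s hdeg r p x)
    (hxpB : MemB 𝒞 D r p (hdeg - p) (x p)) :
    MemBD 𝒞 D s hdeg r p x := by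
  classical
  obtain ⟨⟨hxmem, hxfin⟩, hxF, hxd⟩ := hxZ
  obtain ⟨c, hcmem, hcsum, hcrel⟩ := hxpB
  have hD0 : ∀ i : ℕ, s < i → ∀ m : M, D i m = 0 := fun i hi m => by rw [hvan i hi]; rfl
  set c' : ℤ → M := fun a => if p - r + 1 ≤ a ∧ a ≤ p then c (p - a).toNat else 0 with hc'def
  have hc'_eq : ∀ kk : ℕ, kk ≤ r - 1 → c' (p - (kk : ℤ)) = c kk := by
    intro kk hkk
    simp only [hc'def]
    rw [if_pos (by omega)]
    congr 1
    omega
  have hc'_zero : ∀ a : ℤ, (a < p - r + 1 ∨ p < a) → c' a = 0 := by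
    intro a ha
    simp only [hc'def]
    rw [if_neg (by omega)]
  have hc'_mem : ∀ a : ℤ, c' a ∈ 𝒞 a (hdeg - 1 - a) := by
    intro a
    simp only [hc'def]
    split_ifs with h
    · have h1 : (((p - a).toNat : ℤ)) = p - a := Int.toNat_of_nonneg (by omega)
      have hle : (p - a).toNat ≤ r - 1 := by omega
      have hm := hcmem (p - a).toNat hle
      have he : 𝒞 (p - ((p - a).toNat : ℤ)) (hdeg - p + ((p - a).toNat : ℤ) - 1)
          = 𝒞 a (hdeg - 1 - a) := by rw [h1]; congr 1 <;> ring
      rwa [he] at hm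
    · exact Submodule.zero_mem _
  -- column < p components of d c' vanish
  have key_lt : ∀ a : ℤ, a < p → dTot D s c' a = 0 := by
    intro a ha
    unfold dTot
    by_cases hcase : a ≤ p - r
    · refine Finset.sum_eq_zero fun i hi => ?_
      rw [hc'_zero (a - (i : ℤ)) (by omega), map_zero]
    · -- 1 ≤ p - a ≤ r - 1
      obtain ⟨l, hl1, hl2, hla⟩ : ∃ l : ℕ, 1 ≤ l ∧ l ≤ r - 1 ∧ a = p - (l : ℤ) :=
        ⟨(p - a).toNat, by omega, by omega, by omega⟩
      have hterm : ∀ i : ℕ, D i (c' (a - (i : ℤ)))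
          = if l + i ≤ r - 1 then D i (c (l + i)) else 0 := by
        intro i
        by_cases hcond : l + i ≤ r - 1
        · rw [if_pos hcond]
          have harg : a - (i : ℤ) = p - ((l + i : ℕ) : ℤ) := by push_cast; omega
          rw [harg, hc'_eq (l + i) hcond]
        · rw [if_neg hcond, hc'_zero (a - (i : ℤ)) (by omega), map_zero]
      rw [Finset.sum_congr rfl fun i _ => hterm i]
      have hvanish1 : ∀ i : ℕ, s + 1 ≤ i →
          (if l + i ≤ r - 1 then D i (c (l + i)) else 0) = 0 := by
        intro i hi
        split_ifs
        · exact hD0 i (by omega) _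
        · rfl
      have hvanish2 : ∀ i : ℕ, r - l ≤ i →
          (if l + i ≤ r - 1 then D i (c (l + i)) else 0) = 0 := by
        intro i hi
        rw [if_neg (by omega)]
      rw [sum_range_eq_of_vanish hvanish1 hvanish2]
      have hzero := hcrel l hl1 hl2
      rw [← hzero]
      refine Finset.sum_nbij' (fun i : ℕ => l + i) (fun kk : ℕ => kk - l) ?_ ?_ ?_ ?_ ?_
      · intro i hi
        simp only [Finset.mem_range] at hi
        simp only [Finset.mem_Icc]
        omega
      · intro kk hkk
        simp only [Finset.mem_Icc] at hkk
        simp only [Finset.mem_range]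
        omega
      · intro i hi
        show l + i - l = i
        omega
      · intro kk hkk
        simp only [Finset.mem_Icc] at hkk
        show l + (kk - l) = kk
        omega
      · intro i hi
        simp only [Finset.mem_range] at hi
        rw [if_pos (by omega), Nat.add_sub_cancel_left]
  -- column p component of d c' equals x p
  have key_p : dTot D s c' p = x p := by
    rw [hcsum]
    unfold dTot
    have hvanish1 : ∀ i : ℕ, s + 1 ≤ i → D i (c' (p - (i : ℤ))) = 0 := by
      intro i hi
      exact hD0 i (by omega) _
    have hvanish2 : ∀ i : ℕ, r ≤ i → D i (c' (p - (i : ℤ))) = 0 := by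
      intro i hi
      rw [hc'_zero (p - (i : ℤ)) (by omega), map_zero]
    rw [sum_range_eq_of_vanish hvanish1 hvanish2]
    refine Finset.sum_congr rfl fun i hi => ?_
    simp only [Finset.mem_range] at hi
    rw [hc'_eq i (by omega)]
  have hdc'_mem : ∀ a : ℤ, dTot D s c' a ∈ 𝒞 a (hdeg - a) := by
    intro a
    unfold dTot
    refine Submodule.sum_mem _ fun i _ => ?_
    have hm := hmap i (a - (i : ℤ)) (hdeg - 1 - (a - (i : ℤ))) _ (hc'_mem (a - (i : ℤ)))
    have he : 𝒞 (a - (i : ℤ) + (i : ℤ)) (hdeg - 1 - (a - (i : ℤ)) + 1 - (i : ℤ))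
        = 𝒞 a (hdeg - a) := by congr 1 <;> ring
    rwa [he] at hm
  have hdc'_fin : {a : ℤ | dTot D s c' a ≠ 0}.Finite := by
    refine Set.Finite.subset (Set.finite_Icc (p - r + 1) (p + s)) ?_
    intro a ha
    simp only [Set.mem_setOf_eq] at ha
    by_contra hmem
    simp only [Set.mem_Icc, not_and_or, not_le] at hmem
    apply ha
    unfold dTot
    refine Finset.sum_eq_zero fun i hi => ?_
    simp only [Finset.mem_range] at hi
    rw [hc'_zero (a - (i : ℤ)) (by omega), map_zero]
  set ρ : ℤ → M := fun a => x a - dTot D s c' a with hρdef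
  have hdρ : ∀ a : ℤ, dTot D s ρ a = dTot D s x a := by
    intro a
    have : dTot D s ρ a = dTot D s x a - dTot D s (dTot D s c') a := by
      simp only [hρdef, dTot, map_sub, Finset.sum_sub_distrib]
    rw [this, dTot_dTot_eq_zero D s hvan hrel c' a, sub_zero]
  refine ⟨ρ, c', ⟨⟨?_, ?_⟩, ?_, ?_⟩, ⟨⟨?_, ?_⟩, ?_, ?_⟩, ?_⟩
  · intro a
    exact Submodule.sub_mem _ (hxmem a) (hdc'_mem a)
  · refine Set.Finite.subset (hxfin.union hdc'_fin) ?_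
    intro a ha
    simp only [Set.mem_setOf_eq, hρdef] at ha
    simp only [Set.mem_union, Set.mem_setOf_eq]
    by_contra hcon
    push_neg at hcon
    exact ha (by rw [hcon.1, hcon.2, sub_zero])
  · intro a ha
    simp only [hρdef]
    rcases lt_or_eq_of_le (show a ≤ p by omega) with h | h
    · rw [hxF a h, key_lt a h, sub_zero]
    · rw [h, key_p, sub_self]
  · intro a ha
    rw [hdρ a]
    exact hxd a (by omega)
  · exact hc'_mem
  · refine Set.Finite.subset (Set.finite_Icc (p - r + 1) p) ?_
    intro a ha
    simp only [Set.mem_setOf_eq] at ha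
    simp only [Set.mem_Icc]
    by_contra hcon
    exact ha (hc'_zero a (by omega))
  · intro a ha
    exact hc'_zero a (Or.inl ha)
  · intro a ha
    exact key_lt a (by omega)
  · funext a
    simp only [Pi.add_apply, hρdef]
    exact (sub_add_cancel (x a) (dTot D s c' a)).symm
end

section
/- Let C be a multicomplex over a commutative ring k, with total complex Tot C, differential d, and column filtration F_p. Let r ≥ 1 and p ∈ ℤ. If x ∈ B_r^p(D) = Z_{r−1}^{p+1}(D) + d(Z_{r−1}^{p−r+1}(D)), then its column-p component (x)_p belongs to B_r^p; that is, there exist c_{p−k} ∈ C(p−k, ·) for 0 ≤ k ≤ r−1 with (x)_p = ∑_{k=0}^{r−1} d_k c_{p−k} and ∑_{k=l}^{r−1} d_{k−l} c_{p−k} = 0 for all 1 ≤ l ≤ r−1. -/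
/-!
Multicomplex setup.

A multicomplex (with differentials vanishing above order `s`) over a commutative ring `k`
is modelled inside one ambient `k`-module `M`: the bigraded pieces `C (a, b)` are given by
a family of submodules `𝒞 a b : Submodule k M`, and the structure maps are `k`-linear maps
`D i : M →ₗ[k] M` (for `i : ℕ`) satisfying
* `D i (𝒞 a b) ⊆ 𝒞 (a + i) (b + 1 - i)` (bidegree `(i, 1 - i)`),
* `D i = 0` for `i > s`,
* `∑_{i + j = n} D i ∘ D j = 0` for all `n`.

An element of the total complex `Tot C` in total degree `h` is a function `x : ℤ → M`
(its value at `a` being the column-`a` component) with `x a ∈ 𝒞 a (h - a)` for all `a`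
and finite support; the differential acts componentwise by
`(d x) a = ∑_{i = 0}^{s} D i (x (a - i))`.
-/

variable {k M : Type*} [CommRing k] [AddCommGroup M] [Module k M]

/-- If `x ∈ B_r^p(D) = Z_{r-1}^{p+1}(D) + d (Z_{r-1}^{p-r+1}(D))`, then
its column-`p` component `(x)_p` lies in `B_r^p`. -/
theorem memBD_component_memB
    {k M : Type*} [CommRing k] [AddCommGroup M] [Module k M]
    (𝒞 : ℤ → ℤ → Submodule k M) (D : ℕ → M →ₗ[k] M) (s : ℕ)
    (hmap : ∀ (i : ℕ) (a b : ℤ), ∀ x ∈ 𝒞 a b, D i x ∈ 𝒞 (a + (i : ℤ)) (b + 1 - (i : ℤ)))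
    (hvan : ∀ i : ℕ, s < i → D i = 0)
    (hrel : ∀ (n : ℕ) (x : M), ∑ i ∈ Finset.range (n + 1), D i (D (n - i) x) = 0)
    (hdeg : ℤ) (r : ℕ) (hr : 1 ≤ r) (p : ℤ) (x : ℤ → M)
    (hxB : MemBD 𝒞 D s hdeg r p x) :
    MemB 𝒞 D r p (hdeg - p) (x p) := by
  obtain ⟨ρ, c, ⟨_, hρlow, _⟩, ⟨⟨hcmem, _⟩, hclow, hcd⟩, hx⟩ := hxB
  have hclow' : ∀ kk : ℕ, r ≤ kk → c (p - (kk : ℤ)) = 0 := fun kk hkk =>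
    hclow _ (by omega)
  have hcd' : ∀ l : ℤ, l < p → dTot D s c l = 0 := fun l hl => hcd l (by omega)
  have hvan' : ∀ i : ℕ, s < i → ∀ y : M, D i y = 0 := by
    intro i hi y; rw [hvan i hi]; rfl
  have ext : ∀ (f : ℕ → M) (m n : ℕ), m ≤ n → (∀ i, m ≤ i → f i = 0) →
      ∑ i ∈ Finset.range n, f i = ∑ i ∈ Finset.range m, f i := by
    intro f m n hmn hz
    rw [Finset.sum_subset (Finset.range_subset_range.2 hmn)]
    intro i _ hni
    exact hz i (by simpa using hni)
  refine ⟨fun kk => c (p - (kk : ℤ)), ?_, ?_, ?_⟩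
  · intro kk _
    have := hcmem (p - kk)
    convert this using 2
    ring
  · have hρp : ρ p = 0 := hρlow p (by omega)
    have hxp : x p = dTot D s c p := by rw [hx]; simp [hρp]
    rw [hxp]
    set N := max (s + 1) r with hN
    have h1 : dTot D s c p = ∑ i ∈ Finset.range N, D i (c (p - (i : ℤ))) := by
      rw [dTot]
      exact (ext _ (s + 1) N (le_max_left _ _)
        (fun i hi => hvan' i (by omega) _)).symm
    have h2 : ∑ kk ∈ Finset.range r, D kk (c (p - (kk : ℤ)))
        = ∑ i ∈ Finset.range N, D i (c (p - (i : ℤ))) := by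
      refine (ext _ r N (le_max_right _ _) (fun i hi => ?_)).symm
      rw [hclow' i hi]; simp
    rw [h1, h2]
  · intro l hl1 hl2
    have hlr : l < r := by omega
    have h3 : ∑ kk ∈ Finset.Icc l (r - 1), D (kk - l) (c (p - (kk : ℤ)))
        = ∑ i ∈ Finset.range (r - l), D i (c (p - (l : ℤ) - (i : ℤ))) := by
      rw [← Finset.Ico_add_one_right_eq_Icc, show r - 1 + 1 = r from by omega,
        Finset.sum_Ico_eq_sum_range]
      apply Finset.sum_congr rfl
      intro i _
      rw [show l + i - l = i from by omega,
        show p - ((l + i : ℕ) : ℤ) = p - (l : ℤ) - (i : ℤ) from by push_cast; ring]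
    have h4 : dTot D s c (p - l) = 0 := hcd' _ (by omega)
    rw [h3]
    rw [dTot] at h4
    set N := max (s + 1) (r - l) with hN
    have h5 : ∑ i ∈ Finset.range (r - l), D i (c (p - (l : ℤ) - (i : ℤ)))
        = ∑ i ∈ Finset.range N, D i (c (p - (l : ℤ) - (i : ℤ))) := by
      refine (ext _ (r - l) N (le_max_right _ _) (fun i hi => ?_)).symm
      rw [show p - (l : ℤ) - (i : ℤ) = p - ((l + i : ℕ) : ℤ) by push_cast; ring,
        hclow' (l + i) (by omega)]
      simp
    have h6 : ∑ i ∈ Finset.range (s + 1), D i (c (p - (l : ℤ) - (i : ℤ)))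
        = ∑ i ∈ Finset.range N, D i (c (p - (l : ℤ) - (i : ℤ))) := by
      exact (ext _ (s + 1) N (le_max_left _ _)
        (fun i hi => hvan' i (by omega) _)).symm
    rw [h5, ← h6]
    exact h4
end

section
/- Let C be a multicomplex over a commutative ring k, with total complex Tot C, differential d, and column filtration F_p. For every r ≥ 1 and p ∈ ℤ (within a fixed total degree h), the map ψ : Z_r^p(D)/B_r^p(D) → Z_r^p/B_r^p sending the class of x ∈ Z_r^p(D) to the class of its column-p component (x)_p is well-defined and is an isomorphism of k-modules. -/
/-!
Multicomplex setup.

A multicomplex (with differentials vanishing above order `s`) over a commutative ring `k`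
is modelled inside one ambient `k`-module `M`: the bigraded pieces `C (a, b)` are given by
a family of submodules `𝒞 a b : Submodule k M`, and the structure maps are `k`-linear maps
`D i : M →ₗ[k] M` (for `i : ℕ`) satisfying
* `D i (𝒞 a b) ⊆ 𝒞 (a + i) (b + 1 - i)` (bidegree `(i, 1 - i)`),
* `D i = 0` for `i > s`,
* `∑_{i + j = n} D i ∘ D j = 0` for all `n`.

An element of the total complex `Tot C` in total degree `h` is a function `x : ℤ → M`
(its value at `a` being the column-`a` component) with `x a ∈ 𝒞 a (h - a)` for all `a`
and finite support; the differential acts componentwise by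
`(d x) a = ∑_{i = 0}^{s} D i (x (a - i))`.
-/

variable {k M : Type*} [CommRing k] [AddCommGroup M] [Module k M]

section Helpers

variable {k M : Type*} [CommRing k] [AddCommGroup M] [Module k M]

lemma dTot_vanish (D : ℕ → M →ₗ[k] M) (s : ℕ) (x : ℤ → M) (q : ℤ)
    (hx : ∀ a, a < q → x a = 0) {a : ℤ} (ha : a < q) : dTot D s x a = 0 := by
  refine Finset.sum_eq_zero fun i _ => ?_
  rw [hx _ (by omega), map_zero]

lemma dTot_step (D : ℕ → M →ₗ[k] M) (s : ℕ) (hvan : ∀ i, s < i → D i = 0)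
    (x : ℤ → M) (p : ℤ) (hx : ∀ a, a < p → x a = 0) (n : ℕ) :
    dTot D s x (p + n) = D n (x p) + ∑ i ∈ Finset.range n, D i (x (p + n - i)) := by
  have h1 : dTot D s x (p + n) = ∑ i ∈ Finset.range (max s n + 1), D i (x (p + n - i)) := by
    refine Finset.sum_subset (Finset.range_subset_range.mpr (by omega)) fun i hi hni => ?_
    rw [hvan i (by simp only [Finset.mem_range] at hni ⊢; omega)]
    rfl
  rw [h1]
  have h2 : ∑ i ∈ Finset.range (max s n + 1), D i (x (p + n - i))
      = ∑ i ∈ Finset.range (n + 1), D i (x (p + n - i)) := by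
    symm
    refine Finset.sum_subset (Finset.range_subset_range.mpr (by omega)) fun i hi hni => ?_
    simp only [Finset.mem_range] at hi hni
    rw [hx _ (by omega), map_zero]
  rw [h2, Finset.sum_range_succ]
  have h3 : p + (n : ℤ) - (n : ℤ) = p := by ring
  rw [h3, add_comm]

lemma sum_Icc_shift (l m : ℕ) (g : ℕ → M) :
    ∑ kk ∈ Finset.Icc l (l + m), g kk = ∑ i ∈ Finset.range (m + 1), g (l + i) := by
  refine Finset.sum_nbij' (fun kk => kk - l) (fun i => l + i) ?_ ?_ ?_ ?_ ?_ <;>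
    intro a ha <;> simp only [Finset.mem_Icc, Finset.mem_range] at ha ⊢ <;>
    first
      | omega
      | (congr 1; omega)

lemma dTot_shift (D : ℕ → M →ₗ[k] M) (s : ℕ) (hvan : ∀ i, s < i → D i = 0)
    (x : ℤ → M) (p : ℤ) (r : ℕ) (hx : ∀ a, a < p - r + 1 → x a = 0) (l : ℕ) :
    dTot D s x (p - l) = ∑ kk ∈ Finset.Icc l (r - 1), D (kk - l) (x (p - kk)) := by
  have step1 : dTot D s x (p - l)
      = ∑ i ∈ Finset.range (s + 1), D ((l + i) - l) (x (p - ((l + i : ℕ) : ℤ))) := by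
    refine Finset.sum_congr rfl fun i _ => ?_
    have e1 : p - (l : ℤ) - (i : ℤ) = p - ((l + i : ℕ) : ℤ) := by push_cast; ring
    rw [e1]
    congr 2
    omega
  have step2 : dTot D s x (p - l)
      = ∑ kk ∈ Finset.Icc l (l + s), D (kk - l) (x (p - kk)) := by
    rw [step1]
    exact (sum_Icc_shift l s (fun kk => D (kk - l) (x (p - kk)))).symm
  rw [step2]
  have hsub1 : Finset.Icc l (l + s) ⊆ Finset.Icc l (max (l + s) (r - 1)) :=
    Finset.Icc_subset_Icc_right (le_max_left _ _)
  have hsub2 : Finset.Icc l (r - 1) ⊆ Finset.Icc l (max (l + s) (r - 1)) :=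
    Finset.Icc_subset_Icc_right (le_max_right _ _)
  have e1 : ∑ kk ∈ Finset.Icc l (l + s), D (kk - l) (x (p - kk))
      = ∑ kk ∈ Finset.Icc l (max (l + s) (r - 1)), D (kk - l) (x (p - kk)) := by
    refine Finset.sum_subset hsub1 fun kk hk hk2 => ?_
    simp only [Finset.mem_Icc] at hk hk2
    rw [hvan (kk - l) (by omega)]
    rfl
  have e2 : ∑ kk ∈ Finset.Icc l (r - 1), D (kk - l) (x (p - kk))
      = ∑ kk ∈ Finset.Icc l (max (l + s) (r - 1)), D (kk - l) (x (p - kk)) := by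
    refine Finset.sum_subset hsub2 fun kk hk hk2 => ?_
    simp only [Finset.mem_Icc] at hk hk2
    rw [hx _ (by omega), map_zero]
  rw [e1, ← e2]

end Helpers
section Helpers2

variable {k M : Type*} [CommRing k] [AddCommGroup M] [Module k M]

lemma dTot_dTot (D : ℕ → M →ₗ[k] M) (s : ℕ) (hvan : ∀ i, s < i → D i = 0)
    (hrel : ∀ (n : ℕ) (x : M), ∑ i ∈ Finset.range (n + 1), D i (D (n - i) x) = 0)
    (x : ℤ → M) (a : ℤ) : dTot D s (dTot D s x) a = 0 := by
  show ∑ i ∈ Finset.range (s + 1),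
      D i (∑ j ∈ Finset.range (s + 1), D j (x (a - i - j))) = 0
  simp_rw [map_sum]
  have key : ∀ i ∈ Finset.range (s + 1),
      ∑ j ∈ Finset.range (s + 1), D i (D j (x (a - i - j)))
        = ∑ n ∈ Finset.range (2 * s + 1),
            (if i ≤ n then D i (D (n - i) (x (a - n))) else 0) := by
    intro i hi
    simp only [Finset.mem_range] at hi
    have e1 : ∑ j ∈ Finset.range (s + 1), D i (D j (x (a - i - j)))
        = ∑ n ∈ Finset.Icc i (i + s), D i (D (n - i) (x (a - n))) := by
      rw [sum_Icc_shift i s (fun n => D i (D (n - i) (x (a - n))))]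
      refine Finset.sum_congr rfl fun j _ => ?_
      have e : a - (i : ℤ) - (j : ℤ) = a - ((i + j : ℕ) : ℤ) := by push_cast; ring
      rw [e]
      have ej : i + j - i = j := by omega
      rw [ej]
    rw [e1]
    have e2 : ∀ n ∈ Finset.Icc i (i + s),
        D i (D (n - i) (x (a - n))) = if i ≤ n then D i (D (n - i) (x (a - n))) else 0 := by
      intro n hn
      simp only [Finset.mem_Icc] at hn
      rw [if_pos hn.1]
    rw [Finset.sum_congr rfl e2]
    refine Finset.sum_subset ?_ fun n hn hn2 => ?_
    · intro n hn
      simp only [Finset.mem_Icc, Finset.mem_range] at hn ⊢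
      omega
    · simp only [Finset.mem_Icc, Finset.mem_range] at hn hn2
      by_cases hc : i ≤ n
      · rw [if_pos hc, hvan (n - i) (by omega), LinearMap.zero_apply, map_zero]
      · rw [if_neg hc]
  rw [Finset.sum_congr rfl key, Finset.sum_comm]
  refine Finset.sum_eq_zero fun n _ => ?_
  have e3 : ∑ i ∈ Finset.range (s + 1), (if i ≤ n then D i (D (n - i) (x (a - n))) else 0)
      = ∑ i ∈ Finset.range (max s n + 1), (if i ≤ n then D i (D (n - i) (x (a - n))) else 0) := by
    refine Finset.sum_subset (Finset.range_subset_range.mpr (by omega)) fun i hi hi2 => ?_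
    simp only [Finset.mem_range] at hi hi2
    by_cases hc : i ≤ n
    · rw [if_pos hc, hvan i (by omega)]; rfl
    · rw [if_neg hc]
  have e4 : ∑ i ∈ Finset.range (max s n + 1), (if i ≤ n then D i (D (n - i) (x (a - n))) else 0)
      = ∑ i ∈ Finset.range (n + 1), (if i ≤ n then D i (D (n - i) (x (a - n))) else 0) := by
    symm
    refine Finset.sum_subset (Finset.range_subset_range.mpr (by omega)) fun i hi hi2 => ?_
    simp only [Finset.mem_range] at hi hi2
    rw [if_neg (by omega)]
  have e5 : ∑ i ∈ Finset.range (n + 1), (if i ≤ n then D i (D (n - i) (x (a - n))) else 0)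
      = ∑ i ∈ Finset.range (n + 1), D i (D (n - i) (x (a - n))) := by
    refine Finset.sum_congr rfl fun i hi => ?_
    simp only [Finset.mem_range] at hi
    rw [if_pos (by omega)]
  rw [e3, e4, e5, hrel]

lemma isTotal_dTot (𝒞 : ℤ → ℤ → Submodule k M) (D : ℕ → M →ₗ[k] M) (s : ℕ)
    (hmap : ∀ (i : ℕ) (a b : ℤ), ∀ x ∈ 𝒞 a b, D i x ∈ 𝒞 (a + (i : ℤ)) (b + 1 - (i : ℤ)))
    (h : ℤ) (x : ℤ → M) (hx : IsTotalElem 𝒞 h x) :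
    IsTotalElem 𝒞 (h + 1) (dTot D s x) := by
  constructor
  · intro a
    refine Submodule.sum_mem _ fun i _ => ?_
    have := hmap i (a - i) (h - (a - i)) _ (hx.1 (a - i))
    have e1 : a - (i : ℤ) + (i : ℤ) = a := by ring
    have e2 : h - (a - (i : ℤ)) + 1 - (i : ℤ) = h + 1 - a := by ring
    rwa [e1, e2] at this
  · have hsub : {a : ℤ | dTot D s x a ≠ 0} ⊆
        ⋃ i ∈ Finset.range (s + 1), (fun t => t + (i : ℤ)) '' {a : ℤ | x a ≠ 0} := by
      intro a ha
      simp only [Set.mem_setOf_eq] at ha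
      by_contra hcon
      apply ha
      refine Finset.sum_eq_zero fun i hi => ?_
      simp only [Set.mem_iUnion, Set.mem_image, Set.mem_setOf_eq, not_exists, not_and] at hcon
      by_cases hz : x (a - i) = 0
      · rw [hz, map_zero]
      · exact absurd (by omega : (a - (i : ℤ)) + (i : ℤ) = a) (hcon i hi _ hz)
    exact (Set.Finite.biUnion (Finset.range (s + 1)).finite_toSet
      (fun i _ => hx.2.image _)).subset hsub

lemma isTotal_sub (𝒞 : ℤ → ℤ → Submodule k M) (h : ℤ) (x y : ℤ → M)
    (hx : IsTotalElem 𝒞 h x) (hy : IsTotalElem 𝒞 h y) :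
    IsTotalElem 𝒞 h (fun a => x a - y a) := by
  constructor
  · exact fun a => Submodule.sub_mem _ (hx.1 a) (hy.1 a)
  · refine ((hx.2.union hy.2).subset ?_)
    intro a ha
    simp only [Set.mem_setOf_eq, Set.mem_union] at ha ⊢
    by_contra hcon
    push_neg at hcon
    exact ha (by rw [hcon.1, hcon.2, sub_zero])

lemma dTot_sub (D : ℕ → M →ₗ[k] M) (s : ℕ) (x y : ℤ → M) (a : ℤ) :
    dTot D s (fun t => x t - y t) a = dTot D s x a - dTot D s y a := by
  show ∑ i ∈ Finset.range (s+1), D i (x (a - i) - y (a - i)) = _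
  simp only [map_sub, Finset.sum_sub_distrib]
  rfl

end Helpers2

/-- The map `ψ : Z_r^p(D)/B_r^p(D) → Z_r^p/B_r^p`, sending the class of
`x` to the class of its column-`p` component `(x)_p`, is well defined and is an isomorphism.
This is expressed as: the (linear) projection `x ↦ (x)_p` maps `Z_r^p(D)` into `Z_r^p`; for
`x ∈ Z_r^p(D)`, `x ∈ B_r^p(D)` if and only if `(x)_p ∈ B_r^p` (well-definedness and
injectivity of the induced map on quotients); and every element of `Z_r^p` is the column-`p`
component of an element of `Z_r^p(D)` (surjectivity). -/
theorem psi_wellDefined_isomorphism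
    {k M : Type*} [CommRing k] [AddCommGroup M] [Module k M]
    (𝒞 : ℤ → ℤ → Submodule k M) (D : ℕ → M →ₗ[k] M) (s : ℕ)
    (hmap : ∀ (i : ℕ) (a b : ℤ), ∀ x ∈ 𝒞 a b, D i x ∈ 𝒞 (a + (i : ℤ)) (b + 1 - (i : ℤ)))
    (hvan : ∀ i : ℕ, s < i → D i = 0)
    (hrel : ∀ (n : ℕ) (x : M), ∑ i ∈ Finset.range (n + 1), D i (D (n - i) x) = 0)
    (hdeg : ℤ) (r : ℕ) (hr : 1 ≤ r) (p : ℤ) :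
    (∀ x : ℤ → M, MemZD 𝒞 D s hdeg r p x → MemZ 𝒞 D r p (hdeg - p) (x p)) ∧
    (∀ x : ℤ → M, MemZD 𝒞 D s hdeg r p x →
      (MemBD 𝒞 D s hdeg r p x ↔ MemB 𝒞 D r p (hdeg - p) (x p))) ∧
    (∀ w : M, MemZ 𝒞 D r p (hdeg - p) w →
      ∃ x : ℤ → M, MemZD 𝒞 D s hdeg r p x ∧ x p = w) := by
  classical
  have hicc : Finset.Icc 0 (r - 1) = Finset.range r := by
    ext m; simp only [Finset.mem_Icc, Finset.mem_range]; omega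
  refine ⟨?_, ?_, ?_⟩
  · -- Part 1
    rintro x ⟨htot, hlow, hd⟩
    refine ⟨htot.1 p, ?_, fun j => -x (p + j), ?_, ?_⟩
    · have h0 := dTot_step D s hvan x p hlow 0
      simp only [Nat.cast_zero, add_zero, Finset.range_zero, Finset.sum_empty] at h0
      rw [hd p (by omega)] at h0
      exact h0.symm
    · intro j h1 h2
      have hmem := htot.1 (p + (j : ℤ))
      have e : hdeg - (p + (j : ℤ)) = hdeg - p - (j : ℤ) := by ring
      rw [e] at hmem
      exact neg_mem hmem
    · intro n h1 h2
      have h0 := dTot_step D s hvan x p hlow n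
      rw [hd (p + (n : ℤ)) (by omega)] at h0
      have hA : D n (x p) = -∑ i ∈ Finset.range n, D i (x (p + n - i)) :=
        eq_neg_of_add_eq_zero_left h0.symm
      rw [hA, ← Finset.sum_neg_distrib]
      refine Finset.sum_congr rfl fun i hi => ?_
      simp only [Finset.mem_range] at hi
      rw [← map_neg]
      congr 1
      show -x (p + (n : ℤ) - (i : ℤ)) = -x (p + ((n - i : ℕ) : ℤ))
      rw [show p + ((n - i : ℕ) : ℤ) = p + (n : ℤ) - (i : ℤ) from by omega]
  · -- Part 2
    rintro x ⟨hxtot, hxlow, hxd⟩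
    constructor
    · -- MemBD → MemB
      rintro ⟨ρ, c, ⟨hρtot, hρlow, hρd⟩, ⟨hctot, hclow, hcd⟩, hsum⟩
      refine ⟨fun kk => c (p - (kk : ℤ)), ?_, ?_, ?_⟩
      · intro kk hkk
        have hmem := hctot.1 (p - (kk : ℤ))
        have e : hdeg - 1 - (p - (kk : ℤ)) = (hdeg - p) + (kk : ℤ) - 1 := by ring
        rwa [e] at hmem
      · have hxp : x p = ρ p + dTot D s c p := by rw [hsum]; rfl
        rw [hxp, hρlow p (by omega), zero_add]
        have h0 := dTot_shift D s hvan c p r hclow 0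
        simp only [Nat.cast_zero, sub_zero, Nat.sub_zero] at h0
        rw [h0, hicc]
      · intro l hl1 hl2
        have h0 := dTot_shift D s hvan c p r hclow l
        rw [hcd (p - (l : ℤ)) (by omega)] at h0
        exact h0.symm
    · -- MemB → MemBD
      rintro ⟨c, hcmem, hcsum, hcrel⟩
      set ct : ℤ → M :=
        fun a => if p - r + 1 ≤ a ∧ a ≤ p then c (p - a).toNat else 0 with hctdef
      have hct1 : ∀ kk : ℕ, kk ≤ r - 1 → ct (p - (kk : ℤ)) = c kk := by
        intro kk hkk
        simp only [hctdef]
        rw [if_pos (by omega)]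
        congr 1
        omega
      have hctlow : ∀ a, a < p - r + 1 → ct a = 0 := by
        intro a ha
        simp only [hctdef]
        rw [if_neg (by omega)]
      have hshift : ∀ l : ℕ, dTot D s ct (p - (l : ℤ))
          = ∑ kk ∈ Finset.Icc l (r - 1), D (kk - l) (c kk) := by
        intro l
        rw [dTot_shift D s hvan ct p r hctlow l]
        refine Finset.sum_congr rfl fun kk hk => ?_
        simp only [Finset.mem_Icc] at hk
        rw [hct1 kk hk.2]
      have hctd : ∀ a, a < p → dTot D s ct a = 0 := by
        intro a ha
        have hl : a = p - (((p - a).toNat : ℤ)) := by omega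
        rw [hl, hshift ((p - a).toNat)]
        by_cases hc2 : (p - a).toNat ≤ r - 1
        · exact hcrel _ (by omega) hc2
        · rw [Finset.Icc_eq_empty (by omega), Finset.sum_empty]
      have hctp : dTot D s ct p = x p := by
        have h0 := hshift 0
        simp only [Nat.cast_zero, sub_zero, Nat.sub_zero] at h0
        rw [h0, hicc, hcsum]
      have hcttot : IsTotalElem 𝒞 (hdeg - 1) ct := by
        constructor
        · intro a
          by_cases hband : p - r + 1 ≤ a ∧ a ≤ p
          · have hcta : ct a = c (p - a).toNat := by
              simp only [hctdef]; rw [if_pos hband]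
            rw [hcta]
            have hmem := hcmem (p - a).toNat (by omega)
            have e1 : p - (((p - a).toNat : ℕ) : ℤ) = a := by omega
            have e2 : (hdeg - p) + (((p - a).toNat : ℕ) : ℤ) - 1 = hdeg - 1 - a := by omega
            rwa [e1, e2] at hmem
          · have hcta : ct a = 0 := by simp only [hctdef]; rw [if_neg hband]
            rw [hcta]; exact zero_mem _
        · refine (Set.finite_Icc (p - r + 1) p).subset ?_
          intro a ha
          simp only [Set.mem_setOf_eq] at ha
          rw [Set.mem_Icc]
          by_contra hcon
          exact ha (by simp only [hctdef]; rw [if_neg hcon])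
      set ρ : ℤ → M := fun a => x a - dTot D s ct a with hρdef
      refine ⟨ρ, ct, ⟨?_, ?_, ?_⟩, ⟨hcttot, hctlow, ?_⟩, ?_⟩
      · have h1 := isTotal_dTot 𝒞 D s hmap (hdeg - 1) ct hcttot
        have e : hdeg - 1 + 1 = hdeg := by ring
        rw [e] at h1
        exact isTotal_sub 𝒞 hdeg x (dTot D s ct) hxtot h1
      · intro a ha
        simp only [hρdef]
        by_cases hc2 : a < p
        · rw [hxlow a hc2, hctd a hc2, sub_zero]
        · have hap : a = p := by omega
          subst hap
          rw [hctp, sub_self]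
      · intro a ha
        rw [hρdef, dTot_sub D s x (dTot D s ct) a, hxd a (by omega),
          dTot_dTot D s hvan hrel ct a, sub_zero]
      · intro a ha
        exact hctd a (by omega)
      · funext a
        simp only [hρdef, Pi.add_apply]
        abel
  · -- Part 3
    rintro w ⟨hw1, hw2, z, hz1, hz2⟩
    set x : ℤ → M := fun a =>
      if a = p then w else if p + 1 ≤ a ∧ a ≤ p + r - 1 then -z (a - p).toNat else 0 with hxdef
    have hxp : x p = w := by simp [hxdef]
    have hxj : ∀ j : ℕ, 1 ≤ j → (j : ℤ) ≤ (r : ℤ) - 1 → x (p + (j : ℤ)) = -z j := by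
      intro j h1 h2
      simp only [hxdef]
      rw [if_neg (by omega), if_pos (by omega)]
      congr 2
      omega
    have hxlow : ∀ a, a < p → x a = 0 := by
      intro a ha
      simp only [hxdef]
      rw [if_neg (by omega), if_neg (by omega)]
    have hxhigh : ∀ a, p + r - 1 < a → x a = 0 := by
      intro a ha
      simp only [hxdef]
      rw [if_neg (by omega), if_neg (by omega)]
    have hmem : ∀ a, x a ∈ 𝒞 a (hdeg - a) := by
      intro a
      by_cases h1 : a = p
      · subst h1; rw [hxp]; exact hw1
      by_cases h2 : p + 1 ≤ a ∧ a ≤ p + r - 1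
      · have hxa : x a = -z (a - p).toNat := by
          simp only [hxdef]; rw [if_neg h1, if_pos h2]
        rw [hxa]
        have hmem2 := hz1 (a - p).toNat (by omega) (by omega)
        have e1 : p + (((a - p).toNat : ℕ) : ℤ) = a := by omega
        have e2 : (hdeg - p) - (((a - p).toNat : ℕ) : ℤ) = hdeg - a := by omega
        rw [e1, e2] at hmem2
        exact neg_mem hmem2
      · have hxa : x a = 0 := by simp only [hxdef]; rw [if_neg h1, if_neg h2]
        rw [hxa]; exact zero_mem _
    have hfin : {a : ℤ | x a ≠ 0}.Finite := by
      refine (Set.finite_Icc p (p + r - 1)).subset ?_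
      intro a ha
      simp only [Set.mem_setOf_eq] at ha
      rw [Set.mem_Icc]
      by_contra hcon
      by_cases hc2 : a < p
      · exact ha (hxlow a hc2)
      · exact ha (hxhigh a (by omega))
    have hdx : ∀ a, a < p + r → dTot D s x a = 0 := by
      intro a ha
      by_cases hlow2 : a < p
      · exact dTot_vanish D s x p hxlow hlow2
      · have hn : a = p + (((a - p).toNat : ℕ) : ℤ) := by omega
        rw [hn, dTot_step D s hvan x p hxlow ((a - p).toNat)]
        set n := (a - p).toNat with hndef
        have hnr : n ≤ r - 1 := by omega
        by_cases h0 : n = 0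
        · rw [h0]
          simp [hxp, hw2]
        · have hsum : ∑ i ∈ Finset.range n, D i (x (p + (n : ℤ) - (i : ℤ)))
              = ∑ i ∈ Finset.range n, D i (-z (n - i)) := by
            refine Finset.sum_congr rfl fun i hi => ?_
            simp only [Finset.mem_range] at hi
            congr 1
            have e : p + (n : ℤ) - (i : ℤ) = p + (((n - i : ℕ) : ℕ) : ℤ) := by omega
            rw [e, hxj (n - i) (by omega) (by omega)]
          rw [hsum, hxp]
          simp only [map_neg, Finset.sum_neg_distrib]
          rw [← hz2 n (by omega) hnr]
          abel
    exact ⟨x, ⟨⟨hmem, hfin⟩, hxlow, hdx⟩, hxp⟩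
end

section
/- Let C be a multicomplex over a commutative ring k, with total complex Tot C, differential d, and column filtration F_p. Let r ≥ 1, p ∈ ℤ, and let x ∈ Z_r^p with witnesses z_{p+1}, …, z_{p+r−1} (i.e. d_0 x = 0 and d_n x = ∑_{i=0}^{n−1} d_i z_{p+n−i} for all 1 ≤ n ≤ r−1). Then the element w = x − z_{p+1} − z_{p+2} − ⋯ − z_{p+r−1} of the total complex lies in Z_r^p(D); that is, w ∈ F_p and dw ∈ F_{p+r}. In particular, every element of Z_r^p is the column-p component of some element of Z_r^p(D). -/
/-!
Multicomplex setup.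

A multicomplex (with differentials vanishing above order `s`) over a commutative ring `k`
is modelled inside one ambient `k`-module `M`: the bigraded pieces `C (a, b)` are given by
a family of submodules `𝒞 a b : Submodule k M`, and the structure maps are `k`-linear maps
`D i : M →ₗ[k] M` (for `i : ℕ`) satisfying
* `D i (𝒞 a b) ⊆ 𝒞 (a + i) (b + 1 - i)` (bidegree `(i, 1 - i)`),
* `D i = 0` for `i > s`,
* `∑_{i + j = n} D i ∘ D j = 0` for all `n`.

An element of the total complex `Tot C` in total degree `h` is a function `x : ℤ → M`
(its value at `a` being the column-`a` component) with `x a ∈ 𝒞 a (h - a)` for all `a`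
and finite support; the differential acts componentwise by
`(d x) a = ∑_{i = 0}^{s} D i (x (a - i))`.
-/

variable {k M : Type*} [CommRing k] [AddCommGroup M] [Module k M]

/-- If `x ∈ Z_r^p` with witnesses `z_{p+1}, …, z_{p+r-1}`, then the total
element `w = x - z_{p+1} - ⋯ - z_{p+r-1}` lies in `Z_r^p(D)`, i.e. `w ∈ F_p` and
`d w ∈ F_{p+r}`. In particular every element of `Z_r^p` is the column-`p` component
of an element of `Z_r^p(D)`. -/
theorem memZ_lift_memZD
    {k M : Type*} [CommRing k] [AddCommGroup M] [Module k M]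
    (𝒞 : ℤ → ℤ → Submodule k M) (D : ℕ → M →ₗ[k] M) (s : ℕ)
    (hmap : ∀ (i : ℕ) (a b : ℤ), ∀ x ∈ 𝒞 a b, D i x ∈ 𝒞 (a + (i : ℤ)) (b + 1 - (i : ℤ)))
    (hvan : ∀ i : ℕ, s < i → D i = 0)
    (hrel : ∀ (n : ℕ) (x : M), ∑ i ∈ Finset.range (n + 1), D i (D (n - i) x) = 0)
    (r : ℕ) (hr : 1 ≤ r) (p b : ℤ) (x : M) (hx : x ∈ 𝒞 p b)
    (hd0 : D 0 x = 0) (z : ℕ → M)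
    (hzmem : ∀ j : ℕ, 1 ≤ j → j ≤ r - 1 → z j ∈ 𝒞 (p + (j : ℤ)) (b - (j : ℤ)))
    (hzeq : ∀ n : ℕ, 1 ≤ n → n ≤ r - 1 →
      D n x = ∑ i ∈ Finset.range n, D i (z (n - i)))
    (w : ℤ → M)
    (hw : ∀ a : ℤ, w a = if a = p then x
      else if 1 ≤ a - p ∧ a - p ≤ (r : ℤ) - 1 then -z (a - p).toNat else 0) :
    MemZD 𝒞 D s (p + b) r p w ∧ w p = x := by

  have hwp : w p = x := by rw [hw]; simp
  have hzeq' : ∀ n : ℕ, n ≤ r - 1 → D n x = ∑ i ∈ Finset.range n, D i (z (n - i)) := by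
    intro n h1
    rcases Nat.eq_zero_or_pos n with h0 | h0
    · subst h0; simpa using hd0
    · exact hzeq n h0 h1
  refine ⟨⟨⟨?_, ?_⟩, ?_, ?_⟩, hwp⟩
  · intro a
    rw [hw]
    split_ifs with h1 h2
    · subst h1; simpa using hx
    · refine neg_mem ?_
      obtain ⟨h2a, h2b⟩ := h2
      have hj1 : 1 ≤ (a - p).toNat := by omega
      have hj2 : (a - p).toNat ≤ r - 1 := by omega
      have hmem := hzmem _ hj1 hj2
      have hcast : ((a - p).toNat : ℤ) = a - p := by omega
      rw [hcast] at hmem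
      convert hmem using 2 <;> ring
    · exact zero_mem _
  · apply Set.Finite.subset (Set.finite_Icc p (p + r))
    intro a ha
    simp only [Set.mem_setOf_eq] at ha
    rw [hw] at ha
    simp only [Set.mem_Icc]
    split_ifs at ha with h1 h2
    · omega
    · omega
    · exact absurd rfl ha
  · intro a halt
    rw [hw]
    split_ifs with h1 h2
    · exact absurd h1 (by omega)
    · exact absurd h2.1 (by omega)
    · rfl
  · intro a ha
    unfold dTot
    by_cases hap : a < p
    · apply Finset.sum_eq_zero; intro i hi
      rw [hw]
      split_ifs with h1 h2
      · exact absurd h1 (by omega)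
      · exact absurd h2.1 (by omega)
      · exact map_zero _
    · push_neg at hap
      set n : ℕ := (a - p).toNat with hn
      have hna : (n : ℤ) = a - p := by omega
      have hnr : n ≤ r - 1 := by omega
      set N := max (n + 1) (s + 1) with hN
      have hsum : ∑ i ∈ Finset.range (s + 1), D i (w (a - (i : ℤ)))
          = ∑ i ∈ Finset.range N, D i (w (a - (i : ℤ))) := by
        apply Finset.sum_subset
        · exact Finset.range_subset_range.mpr (by omega)
        · intro i _ hi
          simp only [Finset.mem_range] at hi
          rw [hvan i (by omega)]
          rfl
      rw [hsum]
      have hterm : ∀ i ∈ Finset.range N, D i (w (a - (i : ℤ))) =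
          (if i = n then D n x else 0) + (if i < n then -(D i (z (n - i))) else 0) := by
        intro i _
        rw [hw]
        rcases lt_trichotomy i n with hlt | heq | hgt
        · have c1 : ¬ (a - (i : ℤ) = p) := by omega
          have c2 : 1 ≤ a - (i : ℤ) - p ∧ a - (i : ℤ) - p ≤ (r : ℤ) - 1 := by omega
          rw [if_neg c1, if_pos c2, if_neg (by omega), if_pos hlt]
          have hth : (a - (i : ℤ) - p).toNat = n - i := by omega
          rw [hth, map_neg, zero_add]
        · subst heq
          rw [if_pos (by omega), if_pos rfl, if_neg (lt_irrefl _)]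
          simp
        · rw [if_neg (by omega), if_neg (by omega), if_neg (by omega), if_neg (by omega)]
          simp
      rw [Finset.sum_congr rfl hterm, Finset.sum_add_distrib]
      have hfirst : ∑ i ∈ Finset.range N, (if i = n then D n x else 0) = D n x := by
        rw [Finset.sum_ite_eq' (Finset.range N) n (fun _ => D n x)]
        rw [if_pos (Finset.mem_range.mpr (by omega))]
      have hsecond : ∑ i ∈ Finset.range N, (if i < n then -(D i (z (n - i))) else 0)
          = -∑ i ∈ Finset.range n, D i (z (n - i)) := by
        rw [← Finset.sum_filter]
        rw [show (Finset.range N).filter (· < n) = Finset.range n by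
          ext i; simp only [Finset.mem_filter, Finset.mem_range]; omega]
        exact Finset.sum_neg_distrib _
      rw [hfirst, hsecond, hzeq' n hnr]
      exact add_neg_cancel _
end

section
/- Let C be a multicomplex over a commutative ring k with differentials d_0, d_1, …, d_s. Let r ≥ 1, p ∈ ℤ, and let x ∈ Z_r^p with witnesses z_{p+1}, …, z_{p+r−1} (i.e. d_0 x = 0 and d_n x = ∑_{i=0}^{n−1} d_i z_{p+n−i} for all 1 ≤ n ≤ r−1). Then the element d_r x − ∑_{i=1}^{r−1} d_i z_{p+r−i} of column p+r belongs to Z_r^{p+r}. -/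
/-!
Multicomplex setup.

A multicomplex (with differentials vanishing above order `s`) over a commutative ring `k`
is modelled inside one ambient `k`-module `M`: the bigraded pieces `C (a, b)` are given by
a family of submodules `𝒞 a b : Submodule k M`, and the structure maps are `k`-linear maps
`D i : M →ₗ[k] M` (for `i : ℕ`) satisfying
* `D i (𝒞 a b) ⊆ 𝒞 (a + i) (b + 1 - i)` (bidegree `(i, 1 - i)`),
* `D i = 0` for `i > s`,
* `∑_{i + j = n} D i ∘ D j = 0` for all `n`.

An element of the total complex `Tot C` in total degree `h` is a function `x : ℤ → M`
(its value at `a` being the column-`a` component) with `x a ∈ 𝒞 a (h - a)` for all `a`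
and finite support; the differential acts componentwise by
`(d x) a = ∑_{i = 0}^{s} D i (x (a - i))`.
-/

variable {k M : Type*} [CommRing k] [AddCommGroup M] [Module k M]

section MultiAux

variable {k M : Type*} [CommRing k] [AddCommGroup M] [Module k M]

private lemma aux_sum_split' (D : ℕ → M →ₗ[k] M)
    (hrel : ∀ (n : ℕ) (w : M), ∑ i ∈ Finset.range (n + 1), D i (D (n - i) w) = 0)
    (w : M) (N n : ℕ) (hn : n ≤ N) :
    ∑ i ∈ Finset.range (n + 1), D i (D (N - i) w)
      = - ∑ j ∈ Finset.range (N - n), D (N - j) (D j w) := by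
  have h0 := hrel N w
  have hsplit : ∑ i ∈ Finset.range (n + 1), D i (D (N - i) w)
        + ∑ i ∈ Finset.Ico (n + 1) (N + 1), D i (D (N - i) w)
      = ∑ i ∈ Finset.range (N + 1), D i (D (N - i) w) := by
    simp only [Finset.range_eq_Ico]
    exact Finset.sum_Ico_consecutive _ (by omega) (by omega)
  have hre : ∑ i ∈ Finset.Ico (n + 1) (N + 1), D i (D (N - i) w)
      = ∑ j ∈ Finset.range (N - n), D (N - j) (D j w) := by
    rw [Finset.sum_Ico_eq_sum_range]
    have e : N + 1 - (n + 1) = N - n := by omega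
    rw [e, ← Finset.sum_range_reflect (fun j => D (N - j) (D j w)) (N - n)]
    apply Finset.sum_congr rfl
    intro t ht
    simp only [Finset.mem_range] at ht
    have e1 : n + 1 + t = N - (N - n - 1 - t) := by omega
    have e2 : N - (n + 1 + t) = N - n - 1 - t := by omega
    rw [e2, e1]
  rw [hre] at hsplit
  rw [h0] at hsplit
  exact eq_neg_of_add_eq_zero_left hsplit

private lemma aux_pairs' (D : ℕ → M →ₗ[k] M) (z : ℕ → M) (r n : ℕ) :
    ∑ j ∈ Finset.range r, ∑ t ∈ Finset.range j, D (r + n - j) (D t (z (j - t)))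
      = ∑ u ∈ Finset.Icc 1 (r - 1), ∑ j ∈ Finset.range (r - u),
          D (r + n - u - j) (D j (z u)) := by
  rw [Finset.sum_sigma', Finset.sum_sigma']
  refine Finset.sum_nbij' (fun a => ⟨a.1 - a.2, a.2⟩) (fun a => ⟨a.1 + a.2, a.2⟩) ?_ ?_ ?_ ?_ ?_
  · rintro ⟨j, t⟩ hm
    simp only [Finset.mem_sigma, Finset.mem_range, Finset.mem_Icc] at hm ⊢
    omega
  · rintro ⟨u, j⟩ hm
    simp only [Finset.mem_sigma, Finset.mem_range, Finset.mem_Icc] at hm ⊢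
    omega
  · rintro ⟨j, t⟩ hm
    simp only [Finset.mem_sigma, Finset.mem_range] at hm
    have e : j - t + t = j := by omega
    simp only [e]
  · rintro ⟨u, j⟩ hm
    simp only [Finset.mem_sigma, Finset.mem_range, Finset.mem_Icc] at hm
    have e : u + j - j = u := by omega
    simp only [e]
  · rintro ⟨j, t⟩ hm
    simp only [Finset.mem_sigma, Finset.mem_range] at hm
    have e1 : r + n - (j - t) - t = r + n - j := by omega
    have e2 : j - (j - t) = t := by omega
    simp only [e1, e2]

end MultiAux

/-- If `x ∈ Z_r^p` with witnesses `z_{p+1}, …, z_{p+r-1}`, then the element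
`d_r x - ∑_{i=1}^{r-1} d_i z_{p+r-i}` of column `p + r` belongs to `Z_r^{p+r}`. -/
theorem differential_r_maps_cycles_to_cycles
    {k M : Type*} [CommRing k] [AddCommGroup M] [Module k M]
    (𝒞 : ℤ → ℤ → Submodule k M) (D : ℕ → M →ₗ[k] M) (s : ℕ)
    (hmap : ∀ (i : ℕ) (a b : ℤ), ∀ x ∈ 𝒞 a b, D i x ∈ 𝒞 (a + (i : ℤ)) (b + 1 - (i : ℤ)))
    (hvan : ∀ i : ℕ, s < i → D i = 0)
    (hrel : ∀ (n : ℕ) (x : M), ∑ i ∈ Finset.range (n + 1), D i (D (n - i) x) = 0)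
    (r : ℕ) (hr : 1 ≤ r) (p b : ℤ) (x : M) (hx : x ∈ 𝒞 p b)
    (hd0 : D 0 x = 0) (z : ℕ → M)
    (hzmem : ∀ j : ℕ, 1 ≤ j → j ≤ r - 1 → z j ∈ 𝒞 (p + (j : ℤ)) (b - (j : ℤ)))
    (hzeq : ∀ n : ℕ, 1 ≤ n → n ≤ r - 1 →
      D n x = ∑ i ∈ Finset.range n, D i (z (n - i))) :
    MemZ 𝒞 D r (p + (r : ℤ)) (b + 1 - (r : ℤ))
      (D r x - ∑ i ∈ Finset.Icc 1 (r - 1), D i (z (r - i))) := by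
    classical
  have hy : ∑ i ∈ Finset.Icc 1 (r - 1), D i (z (r - i))
      = ∑ u ∈ Finset.Icc 1 (r - 1), D (r - u) (z u) := by
    refine Finset.sum_nbij' (fun i => r - i) (fun u => r - u) ?_ ?_ ?_ ?_ ?_ <;>
      (intro a ha; simp only [Finset.mem_Icc] at ha ⊢)
    · omega
    · omega
    · omega
    · omega
    · have e : r - (r - a) = a := by omega
      rw [e]
  set z' : ℕ → M := fun m =>
    (∑ u ∈ Finset.Icc 1 (r - 1), D (r + m - u) (z u)) - D (r + m) x with hz'def
  have key : ∀ n : ℕ,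
      ∑ i ∈ Finset.range (n + 1), D i (D (r + n - i) x)
        = ∑ u ∈ Finset.Icc 1 (r - 1), ∑ i ∈ Finset.range (n + 1),
            D i (D (r + n - u - i) (z u)) := by
    intro n
    have h1 := aux_sum_split' D hrel x (r + n) n (by omega)
    have e1 : r + n - n = r := by omega
    rw [e1] at h1
    have h2 : ∀ u ∈ Finset.Icc 1 (r - 1),
        ∑ i ∈ Finset.range (n + 1), D i (D (r + n - u - i) (z u))
          = - ∑ j ∈ Finset.range (r - u), D (r + n - u - j) (D j (z u)) := by
      intro u hu
      simp only [Finset.mem_Icc] at hu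
      have h3 := aux_sum_split' D hrel (z u) (r + n - u) n (by omega)
      have e2 : r + n - u - n = r - u := by omega
      rw [e2] at h3
      exact h3
    calc ∑ i ∈ Finset.range (n + 1), D i (D (r + n - i) x)
        = - ∑ j ∈ Finset.range r, D (r + n - j) (D j x) := h1
      _ = - ∑ j ∈ Finset.range r, ∑ t ∈ Finset.range j,
            D (r + n - j) (D t (z (j - t))) := by
          congr 1
          apply Finset.sum_congr rfl
          intro j hj
          simp only [Finset.mem_range] at hj
          rcases Nat.eq_zero_or_pos j with h | h
          · subst h; simp [hd0]
          · rw [hzeq j h (by omega), map_sum]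
      _ = - ∑ u ∈ Finset.Icc 1 (r - 1), ∑ j ∈ Finset.range (r - u),
            D (r + n - u - j) (D j (z u)) := by
          rw [aux_pairs']
      _ = ∑ u ∈ Finset.Icc 1 (r - 1), ∑ i ∈ Finset.range (n + 1),
            D i (D (r + n - u - i) (z u)) := by
          rw [← Finset.sum_neg_distrib]
          exact Finset.sum_congr rfl fun u hu => (h2 u hu).symm
  have claim : ∀ n : ℕ,
      D n (D r x - ∑ u ∈ Finset.Icc 1 (r - 1), D (r - u) (z u))
        = ∑ i ∈ Finset.range n, D i (z' (n - i)) := by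
    intro n
    have hk := key n
    rw [Finset.sum_range_succ] at hk
    have e1 : r + n - n = r := by omega
    rw [e1] at hk
    have hk2 : ∑ u ∈ Finset.Icc 1 (r - 1), ∑ i ∈ Finset.range (n + 1),
          D i (D (r + n - u - i) (z u))
        = (∑ u ∈ Finset.Icc 1 (r - 1), ∑ i ∈ Finset.range n,
            D i (D (r + n - u - i) (z u)))
          + ∑ u ∈ Finset.Icc 1 (r - 1), D n (D (r - u) (z u)) := by
      rw [← Finset.sum_add_distrib]
      apply Finset.sum_congr rfl
      intro u hu
      simp only [Finset.mem_Icc] at hu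
      rw [Finset.sum_range_succ]
      have e : r + n - u - n = r - u := by omega
      rw [e]
    rw [hk2] at hk
    have hrhs : ∑ i ∈ Finset.range n, D i (z' (n - i))
        = (∑ u ∈ Finset.Icc 1 (r - 1), ∑ i ∈ Finset.range n,
            D i (D (r + n - u - i) (z u)))
          - ∑ i ∈ Finset.range n, D i (D (r + n - i) x) := by
      have h4 : ∀ i ∈ Finset.range n, D i (z' (n - i))
          = (∑ u ∈ Finset.Icc 1 (r - 1), D i (D (r + n - u - i) (z u)))
            - D i (D (r + n - i) x) := by
        intro i hi
        simp only [Finset.mem_range] at hi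
        simp only [hz'def, map_sub, map_sum]
        congr 1
        · apply Finset.sum_congr rfl
          intro u hu
          simp only [Finset.mem_Icc] at hu
          have e : r + (n - i) - u = r + n - u - i := by omega
          rw [e]
        · have e : r + (n - i) = r + n - i := by omega
          rw [e]
      rw [Finset.sum_congr rfl h4, Finset.sum_sub_distrib, Finset.sum_comm]
    rw [map_sub, map_sum, hrhs, sub_eq_sub_iff_add_eq_add,
      add_comm (D n (D r x))]
    exact hk
  rw [show (D r x - ∑ i ∈ Finset.Icc 1 (r - 1), D i (z (r - i)))
      = D r x - ∑ u ∈ Finset.Icc 1 (r - 1), D (r - u) (z u) from by rw [hy]]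
  refine ⟨?_, ?_, z', ?_, ?_⟩
  · apply Submodule.sub_mem
    · exact hmap r p b x hx
    · apply Submodule.sum_mem
      intro u hu
      simp only [Finset.mem_Icc] at hu
      have h1 := hmap (r - u) (p + (u : ℤ)) (b - (u : ℤ)) (z u) (hzmem u hu.1 hu.2)
      have e1 : p + (u : ℤ) + ((r - u : ℕ) : ℤ) = p + (r : ℤ) := by omega
      have e2 : b - (u : ℤ) + 1 - ((r - u : ℕ) : ℤ) = b + 1 - (r : ℤ) := by omega
      rw [e1, e2] at h1
      exact h1
  · have h0 := claim 0
    simpa using h0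
  · intro j hj1 hj2
    apply Submodule.sub_mem
    · apply Submodule.sum_mem
      intro u hu
      simp only [Finset.mem_Icc] at hu
      have h1 := hmap (r + j - u) (p + (u : ℤ)) (b - (u : ℤ)) (z u) (hzmem u hu.1 hu.2)
      have e1 : p + (u : ℤ) + ((r + j - u : ℕ) : ℤ) = p + (r : ℤ) + (j : ℤ) := by omega
      have e2 : b - (u : ℤ) + 1 - ((r + j - u : ℕ) : ℤ) = b + 1 - (r : ℤ) - (j : ℤ) := by
        omega
      rw [e1, e2] at h1
      exact h1
    · have h1 := hmap (r + j) p b x hx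
      have e1 : p + ((r + j : ℕ) : ℤ) = p + (r : ℤ) + (j : ℤ) := by omega
      have e2 : b + 1 - ((r + j : ℕ) : ℤ) = b + 1 - (r : ℤ) - (j : ℤ) := by omega
      rw [e1, e2] at h1
      exact h1
  · intro n _ _
    exact claim n
end

section
/- Let C be a multicomplex over a commutative ring k, with total complex Tot C, differential d, and column filtration F_p. Let r ≥ 1 and p ∈ ℤ. Under the isomorphism ψ : Z_r^p(D)/B_r^p(D) → Z_r^p/B_r^p sending [x] to [(x)_p], the r-th differential δ_r of the spectral sequence (induced by d, i.e. δ_r([x]) = [dx] : Z_r^p(D)/B_r^p(D) → Z_r^{p+r}(D)/B_r^{p+r}(D)) corresponds to the map ∂_r : Z_r^p/B_r^p → Z_r^{p+r}/B_r^{p+r} given by ∂_r([x]) = [d_r x − ∑_{i=1}^{r−1} d_i z_{p+r−i}], where z_{p+1}, …, z_{p+r−1} are witnesses for x ∈ Z_r^p. Precisely: for every x ∈ Z_r^p with witnesses z_{p+1}, …, z_{p+r−1}, the element w = x − z_{p+1} − ⋯ − z_{p+r−1} lies in Z_r^p(D), ψ([w]) = [x], and ψ([dw]) = [d_r x − ∑_{i=1}^{r−1}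 d_i z_{p+r−i}] in Z_r^{p+r}/B_r^{p+r}. -/
/-!
Multicomplex setup.

A multicomplex (with differentials vanishing above order `s`) over a commutative ring `k`
is modelled inside one ambient `k`-module `M`: the bigraded pieces `C (a, b)` are given by
a family of submodules `𝒞 a b : Submodule k M`, and the structure maps are `k`-linear maps
`D i : M →ₗ[k] M` (for `i : ℕ`) satisfying
* `D i (𝒞 a b) ⊆ 𝒞 (a + i) (b + 1 - i)` (bidegree `(i, 1 - i)`),
* `D i = 0` for `i > s`,
* `∑_{i + j = n} D i ∘ D j = 0` for all `n`.

An element of the total complex `Tot C` in total degree `h` is a function `x : ℤ → M`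
(its value at `a` being the column-`a` component) with `x a ∈ 𝒞 a (h - a)` for all `a`
and finite support; the differential acts componentwise by
`(d x) a = ∑_{i = 0}^{s} D i (x (a - i))`.
-/

variable {k M : Type*} [CommRing k] [AddCommGroup M] [Module k M]

/-! ### Auxiliary lemmas -/

lemma triangle_sum' {A : Type*} [AddCommMonoid A] (N : ℕ) (F : ℕ → ℕ → A) :
    ∑ i ∈ Finset.range (N+1), ∑ j ∈ Finset.range (N+1-i), F i j
      = ∑ n ∈ Finset.range (N+1), ∑ i ∈ Finset.range (n+1), F i (n-i) := by
  rw [Finset.sum_sigma', Finset.sum_sigma']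
  refine Finset.sum_nbij' (fun p => ⟨p.1 + p.2, p.1⟩) (fun p => ⟨p.2, p.1 - p.2⟩)
    ?_ ?_ ?_ ?_ ?_
  · rintro ⟨i, j⟩ hij
    simp only [Finset.mem_sigma, Finset.mem_range] at hij ⊢
    omega
  · rintro ⟨n, i⟩ hni
    simp only [Finset.mem_sigma, Finset.mem_range] at hni ⊢
    omega
  · rintro ⟨i, j⟩ hij; simp
  · rintro ⟨n, i⟩ hni
    simp only [Finset.mem_sigma, Finset.mem_range] at hni
    have : i + (n - i) = n := by omega
    simp [this]
  · rintro ⟨i, j⟩ hij; simp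

lemma dTot_ext' {k M : Type*} [CommRing k] [AddCommGroup M] [Module k M]
    (D : ℕ → M →ₗ[k] M) (s : ℕ) (hvan : ∀ i : ℕ, s < i → D i = 0)
    (N : ℕ) (hN : s ≤ N) (y : ℤ → M) (a : ℤ) :
    dTot D s y a = ∑ i ∈ Finset.range (N+1), D i (y (a - (i : ℤ))) := by
  unfold dTot
  refine Finset.sum_subset (by simp [Finset.range_subset]; omega) ?_
  intro i hi hi2
  simp only [Finset.mem_range] at hi hi2
  rw [hvan i (by omega)]
  simp

lemma dd_eq_zero' {k M : Type*} [CommRing k] [AddCommGroup M] [Module k M]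
    (D : ℕ → M →ₗ[k] M) (s : ℕ)
    (hvan : ∀ i : ℕ, s < i → D i = 0)
    (hrel : ∀ (n : ℕ) (x : M), ∑ i ∈ Finset.range (n + 1), D i (D (n - i) x) = 0)
    (y : ℤ → M) (a : ℤ) : dTot D s (dTot D s y) a = 0 := by
  have h1 : dTot D s (dTot D s y) a
      = ∑ i ∈ Finset.range (2*s+1), ∑ j ∈ Finset.range (2*s+1-i),
          D i (D j (y (a - (i:ℤ) - (j:ℤ)))) := by
    rw [dTot_ext' D s hvan (2*s) (by omega)]
    refine Finset.sum_congr rfl fun i hi => ?_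
    simp only [Finset.mem_range] at hi
    by_cases his : i ≤ s
    · have hsum : dTot D s y (a - (i:ℤ)) = ∑ j ∈ Finset.range (2*s+1-i),
          D j (y (a - (i:ℤ) - (j:ℤ))) := by
        rw [dTot_ext' D s hvan (2*s - i) (by omega)]
        congr 2
        omega
      rw [hsum, map_sum]
    · rw [hvan i (by omega)]
      simp
  rw [h1]
  have h2 : ∀ i ∈ Finset.range (2*s+1), ∀ j ∈ Finset.range (2*s+1-i),
      D i (D j (y (a - (i:ℤ) - (j:ℤ)))) = D i (D j (y (a - ((i+j : ℕ):ℤ)))) := by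
    intro i _ j _
    congr 2
    push_cast
    ring
  rw [Finset.sum_congr rfl fun i hi => Finset.sum_congr rfl fun j hj => h2 i hi j hj]
  rw [triangle_sum' (2*s) (fun i j => D i (D j (y (a - ((i+j : ℕ):ℤ)))))]
  refine Finset.sum_eq_zero fun n hn => ?_
  refine Eq.trans ?_ (hrel n (y (a - (n:ℤ))))
  refine Finset.sum_congr rfl fun i hi => ?_
  simp only [Finset.mem_range] at hi
  have hin : i + (n - i) = n := by omega
  rw [hin]

/-- Under the isomorphism `ψ`, the `r`-th differential `δ_r` of the
spectral sequence corresponds to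
`∂_r [x] = [d_r x - ∑_{i=1}^{r-1} d_i z_{p+r-i}]`. Precisely, for `x ∈ Z_r^p` with
witnesses `z_{p+1}, …, z_{p+r-1}`, the total element `w = x - z_{p+1} - ⋯ - z_{p+r-1}`
lies in `Z_r^p(D)`, its column-`p` component is `x` (so `ψ [w] = [x]`), its differential
`d w` lies in `Z_r^{p+r}(D)`, and the column-`(p+r)` component of `d w` is exactly
`d_r x - ∑_{i=1}^{r-1} d_i z_{p+r-i}` (so `ψ [d w] = [d_r x - ∑ d_i z_{p+r-i}]`). -/
theorem spectralSequence_differential_formula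
    {k M : Type*} [CommRing k] [AddCommGroup M] [Module k M]
    (𝒞 : ℤ → ℤ → Submodule k M) (D : ℕ → M →ₗ[k] M) (s : ℕ)
    (hmap : ∀ (i : ℕ) (a b : ℤ), ∀ x ∈ 𝒞 a b, D i x ∈ 𝒞 (a + (i : ℤ)) (b + 1 - (i : ℤ)))
    (hvan : ∀ i : ℕ, s < i → D i = 0)
    (hrel : ∀ (n : ℕ) (x : M), ∑ i ∈ Finset.range (n + 1), D i (D (n - i) x) = 0)
    (r : ℕ) (hr : 1 ≤ r) (p b : ℤ) (x : M) (hx : x ∈ 𝒞 p b)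
    (hd0 : D 0 x = 0) (z : ℕ → M)
    (hzmem : ∀ j : ℕ, 1 ≤ j → j ≤ r - 1 → z j ∈ 𝒞 (p + (j : ℤ)) (b - (j : ℤ)))
    (hzeq : ∀ n : ℕ, 1 ≤ n → n ≤ r - 1 →
      D n x = ∑ i ∈ Finset.range n, D i (z (n - i)))
    (w : ℤ → M)
    (hw : ∀ a : ℤ, w a = if a = p then x
      else if 1 ≤ a - p ∧ a - p ≤ (r : ℤ) - 1 then -z (a - p).toNat else 0) :
    MemZD 𝒞 D s (p + b) r p w ∧
    w p = x ∧
    MemZD 𝒞 D s (p + b + 1) r (p + (r : ℤ)) (dTot D s w) ∧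
    dTot D s w (p + (r : ℤ)) =
      D r x - ∑ i ∈ Finset.Icc 1 (r - 1), D i (z (r - i)) := by
  -- Basic facts about `w`.
  have hwp : w p = x := by rw [hw]; simp
  have hw0 : ∀ a : ℤ, a < p ∨ p + (r:ℤ) ≤ a → w a = 0 := by
    intro a ha
    rw [hw, if_neg (by omega), if_neg (by omega)]
  have hwj : ∀ j : ℕ, 1 ≤ j → j ≤ r - 1 → w (p + (j:ℤ)) = - z j := by
    intro j h1 h2
    rw [hw, if_neg (by omega), if_pos (by constructor <;> omega)]
    have : (p + (j:ℤ) - p).toNat = j := by omega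
    rw [this]
  have hwmem : ∀ a : ℤ, w a ∈ 𝒞 a (p + b - a) := by
    intro a
    rcases lt_trichotomy a p with h|h|h
    · rw [hw0 a (Or.inl h)]; exact Submodule.zero_mem _
    · rw [h, hwp]
      have e : p + b - p = b := by ring
      rw [e]; exact hx
    · by_cases h2 : a ≤ p + (r:ℤ) - 1
      · set j := (a - p).toNat with hj
        have haj : a = p + (j:ℤ) := by omega
        have h1j : 1 ≤ j := by omega
        have h2j : j ≤ r - 1 := by omega
        rw [haj, hwj j h1j h2j]
        have e : p + b - (p + (j:ℤ)) = b - (j:ℤ) := by ring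
        rw [e]
        exact Submodule.neg_mem _ (hzmem j h1j h2j)
      · rw [hw0 a (Or.inr (by omega))]; exact Submodule.zero_mem _
  -- Column computation for `d w`.
  have hdcol : ∀ n : ℕ, n ≤ r → dTot D s w (p + (n:ℤ)) =
      ∑ i ∈ Finset.range (n+1), D i (w (p + (n:ℤ) - (i:ℤ))) := by
    intro n hn
    rw [dTot_ext' D s hvan (s + r) (by omega)]
    symm
    refine Finset.sum_subset (by simp [Finset.range_subset]; omega) ?_
    intro i hi hi2
    simp only [Finset.mem_range] at hi hi2
    rw [hw0 (p + (n:ℤ) - (i:ℤ)) (Or.inl (by omega))]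
    simp
  -- `d w` vanishes in columns `< p + r`.
  have hz3 : ∀ a : ℤ, a < p + (r:ℤ) → dTot D s w a = 0 := by
    intro a ha
    by_cases hap : a < p
    · refine Finset.sum_eq_zero fun i hi => ?_
      rw [hw0 (a - (i:ℤ)) (Or.inl (by omega))]
      simp
    · push_neg at hap
      obtain ⟨n, ha2⟩ : ∃ n : ℕ, a = p + (n:ℤ) := ⟨(a - p).toNat, by omega⟩
      have hnr : n ≤ r - 1 := by omega
      rw [ha2, hdcol n (by omega)]
      rcases Nat.eq_zero_or_pos n with h|h
      · subst h
        rw [Finset.sum_range_one]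
        have e : p + ((0:ℕ):ℤ) - ((0:ℕ):ℤ) = p := by push_cast; ring
        rw [e, hwp, hd0]
      · rw [Finset.sum_range_succ]
        have e : p + (n:ℤ) - (n:ℤ) = p := by ring
        rw [e, hwp]
        have hterm : ∀ i ∈ Finset.range n,
            D i (w (p + (n:ℤ) - (i:ℤ))) = - D i (z (n - i)) := by
          intro i hi
          simp only [Finset.mem_range] at hi
          have e2 : p + (n:ℤ) - (i:ℤ) = p + ((n - i : ℕ):ℤ) := by
            push_cast [Nat.cast_sub hi.le]; ring
          rw [e2, hwj (n-i) (by omega) (by omega), map_neg]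
        rw [Finset.sum_congr rfl hterm, Finset.sum_neg_distrib, ← hzeq n h hnr]
        simp
  -- finite support of `w`
  have hfin : {a : ℤ | w a ≠ 0}.Finite := by
    refine Set.Finite.subset (Set.finite_Icc p (p + (r:ℤ) - 1)) ?_
    intro a ha
    simp only [Set.mem_setOf_eq] at ha
    simp only [Set.mem_Icc]
    by_contra hc
    exact ha (hw0 a (by omega))
  refine ⟨⟨⟨hwmem, hfin⟩, fun a ha => hw0 a (Or.inl ha), hz3⟩, hwp, ⟨⟨?_, ?_⟩, hz3, ?_⟩, ?_⟩
  · -- components of `d w` lie in the right bigraded pieces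
    intro a
    refine Submodule.sum_mem _ fun i hi => ?_
    have hm := hmap i (a - (i:ℤ)) (p + b - (a - (i:ℤ))) (w (a - (i:ℤ))) (hwmem (a - (i:ℤ)))
    have e1 : a - (i:ℤ) + (i:ℤ) = a := by ring
    have e2 : p + b - (a - (i:ℤ)) + 1 - (i:ℤ) = p + b + 1 - a := by ring
    rw [e1, e2] at hm
    exact hm
  · -- finite support of `d w`
    refine Set.Finite.subset (Set.finite_Icc p (p + (s:ℤ) + (r:ℤ))) ?_
    intro a ha
    simp only [Set.mem_setOf_eq] at ha
    simp only [Set.mem_Icc]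
    by_contra hc
    push_neg at hc
    refine ha (Finset.sum_eq_zero fun i hi => ?_)
    simp only [Finset.mem_range] at hi
    by_cases hap : a < p
    · rw [hw0 (a - (i:ℤ)) (Or.inl (by omega))]; simp
    · rw [hw0 (a - (i:ℤ)) (Or.inr (by omega))]; simp
  · -- `d (d w) = 0`
    intro a _
    exact dd_eq_zero' D s hvan hrel w a
  · -- the value of `d w` in column `p + r`
    obtain ⟨m, hm⟩ : ∃ m, r = m + 1 := ⟨r - 1, by omega⟩
    subst hm
    rw [hdcol (m+1) le_rfl, Finset.sum_range_succ]
    have e : p + ((m+1:ℕ):ℤ) - ((m+1:ℕ):ℤ) = p := by ring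
    rw [e, hwp, Finset.sum_range_succ']
    have hf0 : w (p + ((m+1:ℕ):ℤ) - ((0:ℕ):ℤ)) = 0 :=
      hw0 _ (Or.inr (by push_cast; omega))
    rw [hf0, map_zero, add_zero]
    have hterm : ∀ i ∈ Finset.range m,
        D (i+1) (w (p + ((m+1:ℕ):ℤ) - ((i+1:ℕ):ℤ))) = - D (i+1) (z (m - i)) := by
      intro i hi
      simp only [Finset.mem_range] at hi
      have e2 : p + ((m+1:ℕ):ℤ) - ((i+1:ℕ):ℤ) = p + ((m - i : ℕ):ℤ) := by
        push_cast [Nat.cast_sub hi.le]; ring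
      rw [e2, hwj (m-i) (by omega) (by omega), map_neg]
    rw [Finset.sum_congr rfl hterm, Finset.sum_neg_distrib]
    have hrhs : ∑ i ∈ Finset.Icc 1 (m+1-1), D i (z (m+1-i))
        = ∑ i ∈ Finset.range m, D (i+1) (z (m - i)) := by
      have h11 : m + 1 - 1 = m := rfl
      rw [h11, ← Finset.Ico_add_one_right_eq_Icc, Finset.sum_Ico_eq_sum_range]
      have h12 : m + 1 - 1 = m := rfl
      rw [h12]
      refine Finset.sum_congr rfl fun i hi => ?_
      simp only [Finset.mem_range] at hi
      have e4 : m + 1 - (1 + i) = m - i := by omega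
      rw [e4, Nat.add_comm 1 i]
    rw [hrhs]
    abel
end
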